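/- arXiv:1510.04649 — 3 statements merged into one kernel-verified Lean document; each statement's English description precedes it below -/
import Mathlib

section
/- Let G be an ultragraph such that every edge e has a vertex in r(e) that is not a sink (i.e. emits at least one edge). If the edge set G¹ is infinite, then the edge shift X_G (the closure of G^∞ in Σ_{G¹}) equals G^∞ ∪ {Ø} ∪ {α finite path : s⁻¹(r(α)) is infinite}, where for a finite path α = α_1⋯α_n, r(α) = r(α_n) and s⁻¹(r(α)) = {e ∈ G¹ : s(e) ∈ r(α)}. -/
namespace OTW

/-- The Ott–Tomforde–Willis full shift over `A`, modelled as the set of "gap-free"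
functions `ℕ → Option A`: finite words are eventually `none`, infinite sequences never. -/
def FullShift (A : Type*) : Set (ℕ → Option A) :=
  {x | ∀ n, x n = none → x (n + 1) = none}

variable {A : Type*}

/-- The finite word `l` as an element of the full shift. -/
def ofList (l : List A) : ℕ → Option A :=
  fun n => if h : n < l.length then some (l.get ⟨n, h⟩) else none

theorem ofList_mem (l : List A) : ofList l ∈ FullShift A := by
  intro n hn
  by_cases h : n < l.length
  · simp [ofList, h] at hn
  · simp only [ofList]
    rw [dif_neg (by omega)]

/-- The infinite sequence `y` as an element of the full shift. -/
def ofSeq (y : ℕ → A) : ℕ → Option A := fun n => some (y n)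

theorem ofSeq_mem (y : ℕ → A) : ofSeq y ∈ FullShift A := by
  intro n hn
  simp [ofSeq] at hn

/-- Truncation of `x` to its first `p` letters. -/
def trunc (p : ℕ) (x : ℕ → Option A) : ℕ → Option A := fun n => if n < p then x n else none

theorem trunc_mem {x : ℕ → Option A} (hx : x ∈ FullShift A) (p : ℕ) :
    trunc p x ∈ FullShift A := by
  intro n hn
  simp only [trunc] at hn ⊢
  by_cases h : n + 1 < p
  · rw [if_pos h]
    rw [if_pos (by omega)] at hn
    exact hx n hn
  · rw [if_neg h]

/-- Generalized cylinder set `Z(w, F)`: sequences extending the finite word `w` whose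
next letter (if any) is not in the finite set `F`. -/
def Cyl (w : List A) (F : Finset A) : Set (ℕ → Option A) :=
  {x | (∀ i (h : i < w.length), x i = some (w.get ⟨i, h⟩)) ∧ ∀ a ∈ F, x w.length ≠ some a}

/-- The topology on the full shift generated by the generalized cylinder sets. -/
instance instTopoFullShift (A : Type*) : TopologicalSpace ↥(FullShift A) :=
  TopologicalSpace.generateFrom {S | ∃ w F, S = Subtype.val ⁻¹' Cyl w F}

/-- The shift map on the full shift. -/
def shiftMap (x : ↥(FullShift A)) : ↥(FullShift A) :=
  ⟨fun n => x.1 (n + 1), fun n hn => x.2 (n + 1) hn⟩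

/-- The length of an element of the full shift, valued in `ℕ∞`. -/
noncomputable def len (x : ℕ → Option A) : ℕ∞ := ⨅ n ∈ {n | x n = none}, (n : ℕ∞)

/-- `x` is an infinite sequence. -/
def IsInf (x : ℕ → Option A) : Prop := ∀ n, x n ≠ none

/-- The word `w` occurs in `x` at position `k`. -/
def hasBlockAt (x : ℕ → Option A) (w : List A) (k : ℕ) : Prop :=
  ∀ i (h : i < w.length), x (k + i) = some (w.get ⟨i, h⟩)

/-- `X_F^inf` : infinite sequences avoiding all blocks from `F`. -/
def XFinf (F : Set (List A)) : Set (ℕ → Option A) :=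
  {x | IsInf x ∧ ∀ w ∈ F, ∀ k, ¬ hasBlockAt x w k}

/-- Concatenation of a finite word with an infinite sequence. -/
def listCat (w : List A) (y : ℕ → A) : ℕ → Option A :=
  fun n => if h : n < w.length then some (w.get ⟨n, h⟩) else some (y (n - w.length))

/-- `X_F^fin` : finite words admitting infinitely many one-letter extensions to
elements of `X_F^inf`. -/
def XFfin (F : Set (List A)) : Set (ℕ → Option A) :=
  {x | ∃ w : List A, x = ofList w ∧
    {a : A | ∃ y : ℕ → A, listCat (w ++ [a]) y ∈ XFinf F}.Infinite}

/-- The shift space `X_F` determined by the forbidden words `F`. -/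
def XF (F : Set (List A)) : Set (ℕ → Option A) := XFinf F ∪ XFfin F

/-- An ultragraph: sources are vertices, ranges are sets of vertices. -/
structure Ultragraph (V E : Type*) where
  s : E → V
  r : E → Set V

/-- The set of infinite paths of an ultragraph. -/
def Ginf {V E : Type*} (G : Ultragraph V E) : Set (ℕ → Option E) :=
  {x | IsInf x ∧ ∀ n e f, x n = some e → x (n + 1) = some f → G.s f ∈ G.r e}

/-- The edge shift of an ultragraph: the closure of the set of infinite paths. -/
def edgeShift {V E : Type*} (G : Ultragraph V E) : Set ↥(FullShift E) :=
  closure {x : ↥(FullShift E) | x.1 ∈ Ginf G}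

/-- A (nonempty) finite path in an ultragraph. -/
def IsPath {V E : Type*} (G : Ultragraph V E) (l : List E) : Prop :=
  l ≠ [] ∧ l.Chain' (fun e f => G.s f ∈ G.r e)

/-- A directed graph. -/
structure DirGraph (V E : Type*) where
  s : E → V
  r : E → V

/-- A directed graph viewed as an ultragraph. -/
def DirGraph.toUltragraph {V E : Type*} (G : DirGraph V E) : Ultragraph V E :=
  ⟨G.s, fun e => {G.r e}⟩

/-- The length-one word `e` as an element of the full shift. -/
def word1 (e : A) : ↥(FullShift A) := ⟨ofList [e], ofList_mem _⟩

/-- A conjugacy between shift spaces: a length-preserving, shift-commuting, continuous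
bijection (between shift-invariant subsets). -/
structure IsConjugacy {A B : Type*} (X : Set ↥(FullShift A)) (Y : Set ↥(FullShift B))
    (φ : ↥X → ↥Y) : Prop where
  shiftInvX : ∀ x : ↥X, shiftMap x.1 ∈ X
  shiftInvY : ∀ y : ↥Y, shiftMap y.1 ∈ Y
  bijective : Function.Bijective φ
  continuous : Continuous φ
  shift_comm : ∀ x : ↥X, (φ ⟨shiftMap x.1, shiftInvX x⟩).1 = shiftMap (φ x).1
  len_eq : ∀ x : ↥X, len (φ x).1.1 = len x.1.1

/-- An eventually finite periodic conjugacy: for some `p ≥ 2`, the initial block of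
length `p` of every `p`-periodic point is mapped to the initial block of length `p`
of its image. -/
def EvFinPeriodic {A B : Type*} {X : Set ↥(FullShift A)} {Y : Set ↥(FullShift B)}
    (φ : ↥X → ↥Y) : Prop :=
  ∃ p : ℕ, 2 ≤ p ∧ ∀ x : ↥X, IsInf x.1.1 → (∀ k, x.1.1 (k + p) = x.1.1 k) →
    ∀ h : (⟨trunc p x.1.1, trunc_mem x.1.2 p⟩ : ↥(FullShift A)) ∈ X,
      ∀ i < p, (φ ⟨⟨trunc p x.1.1, trunc_mem x.1.2 p⟩, h⟩).1.1 i = (φ x).1.1 i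

/-- The range of a finite path (`univ` for the empty path). -/
def rng {V E : Type*} (G : Ultragraph V E) (l : List E) : Set V :=
  (l.getLast?.map G.r).getD Set.univ

/-- The set `X_{ab⁻¹}` of the partial action: elements of the edge shift beginning
with `a` whose next edge (if any) has source in `r(a) ∩ r(b)`. -/
def XwS {V E : Type*} (G : Ultragraph V E) (a b : List E) : Set ↥(FullShift E) :=
  {x | x ∈ edgeShift G ∧ (∀ i (h : i < a.length), x.1 i = some (a.get ⟨i, h⟩)) ∧
    ∀ e, x.1 a.length = some e → G.s e ∈ rng G a ∩ rng G b}

/-- The map `θ_{ba⁻¹}` (raw version): replaces the initial block `a` by `b`. -/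
def theta {E : Type*} (a b : List E) (x : ℕ → Option E) : ℕ → Option E :=
  fun n => if h : n < b.length then some (b.get ⟨n, h⟩) else x (n - b.length + a.length)

theorem theta_mem {E : Type*} {x : ℕ → Option E} (hx : x ∈ FullShift E) (a b : List E) :
    theta a b x ∈ FullShift E := by
  intro n hn
  simp only [theta] at hn ⊢
  split at hn
  · simp at hn
  · rename_i h
    rw [dif_neg (by omega)]
    have h2 : n + 1 - b.length + a.length = (n - b.length + a.length) + 1 := by omega
    rw [h2]
    exact hx _ hn

/-- The map `θ_{ba⁻¹}` as a self-map of the full shift. -/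
def thetaF {E : Type*} (a b : List E) (x : ↥(FullShift E)) : ↥(FullShift E) :=
  ⟨theta a b x.1, theta_mem x.2 a b⟩

/-- A valid pair `(a, b)` representing the reduced group element `ab⁻¹` of the set `V`. -/
def ValidPair {V E : Type*} (G : Ultragraph V E) (a b : List E) : Prop :=
  (a = [] ∨ IsPath G a) ∧ (b = [] ∨ IsPath G b) ∧ (rng G a ∩ rng G b).Nonempty ∧
  ∀ (ha : a ≠ []) (hb : b ≠ []), a.getLast ha ≠ b.getLast hb

/-- The element `ab⁻¹` of the free group on the edges. -/
def pf {E : Type*} (a b : List E) : FreeGroup E :=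
  (a.map FreeGroup.of).prod * ((b.map FreeGroup.of).prod)⁻¹


section Aux

open TopologicalSpace Filter Set

theorem mem_closure_generateFrom' {α : Type*} {g : Set (Set α)} {S : Set α} {x : α}
    (H : ∀ I : Set (Set α), I.Finite → (∀ s ∈ I, s ∈ g ∧ x ∈ s) → (S ∩ ⋂₀ I).Nonempty) :
    x ∈ @closure α (TopologicalSpace.generateFrom g) S := by
  letI := TopologicalSpace.generateFrom g
  rw [mem_closure_iff_nhds, TopologicalSpace.nhds_generateFrom]
  intro t ht
  rw [iInf_subtype'] at ht
  rw [Filter.mem_iInf] at ht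
  obtain ⟨I, Ifin, Vt, hV, rfl⟩ := ht
  obtain ⟨y, hyS, hy⟩ := H ((fun i : {s // x ∈ s ∧ s ∈ g} => i.1) '' I)
    (Ifin.image _) (by rintro s ⟨i, hi, rfl⟩; exact ⟨i.2.2, i.2.1⟩)
  refine ⟨y, ?_, hyS⟩
  rw [Set.mem_iInter]
  intro i
  exact (Filter.mem_principal.mp (hV i)) (hy _ ⟨i.1, i.2, rfl⟩)

theorem fullShift_none_mono {A : Type*} {x : ℕ → Option A} (hx : x ∈ FullShift A) {m n : ℕ}
    (h : x m = none) (hmn : m ≤ n) : x n = none := by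
  induction n, hmn using Nat.le_induction with
  | base => exact h
  | succ n hn ih => exact hx n ih

theorem exists_tail {V E : Type*} (G : Ultragraph V E)
    (h : ∀ e : E, ∃ v ∈ G.r e, ∃ f, G.s f = v) (e : E) :
    ∃ z : ℕ → E, z 0 = e ∧ ∀ n, G.s (z (n + 1)) ∈ G.r (z n) := by
  have hstep : ∀ e : E, ∃ f, G.s f ∈ G.r e := by
    intro e; obtain ⟨v, hv, f, hf⟩ := h e; exact ⟨f, hf ▸ hv⟩
  exact ⟨fun n => Nat.rec e (fun _ prev => Classical.choose (hstep prev)) n, rfl,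
    fun n => Classical.choose_spec (hstep _)⟩

theorem mem_edgeShift_of_chain {V E : Type*} (G : Ultragraph V E)
    (h : ∀ e : E, ∃ v ∈ G.r e, ∃ f, G.s f = v) (l : List E)
    (hchain : l.Chain' (fun e f => G.s f ∈ G.r e))
    (hinf : {f : E | ∀ hl : l ≠ [], G.s f ∈ G.r (l.getLast hl)}.Infinite) :
    (⟨ofList l, ofList_mem l⟩ : ↥(FullShift E)) ∈ edgeShift G := by
  classical
  apply mem_closure_generateFrom'
  intro I Ifin hI
  have hI1 : ∀ s : I, ∃ w F, (s : Set ↥(FullShift E)) = Subtype.val ⁻¹' Cyl w F :=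
    fun s => (hI s s.2).1
  choose w F hwF using hI1
  have hxs : ∀ s : I, (⟨ofList l, ofList_mem l⟩ : ↥(FullShift E)).1 ∈ Cyl (w s) (F s) := by
    intro s
    have := (hI s s.2).2
    rwa [hwF s] at this
  haveI : Finite I := Ifin.to_subtype
  have hBad : (⋃ s : I, (F s : Set E)).Finite :=
    Set.finite_iUnion fun s => (F s).finite_toSet
  obtain ⟨f, hf_ext, hf_bad⟩ : ({f : E | ∀ hl : l ≠ [], G.s f ∈ G.r (l.getLast hl)} \
      ⋃ s : I, (F s : Set E)).Nonempty := (hinf.diff hBad).nonempty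
  obtain ⟨z, hz0, hzstep⟩ := exists_tail G h f
  set Y : ℕ → Option E := listCat l z with hY
  have hYsome : ∀ n, Y n = if hn : n < l.length then some (l.get ⟨n, hn⟩)
      else some (z (n - l.length)) := fun n => rfl
  have hYfull : Y ∈ FullShift E := by
    intro n hn
    rw [hYsome] at hn
    split at hn <;> simp at hn
  -- length bound: each w s has length ≤ l.length
  have hwlen : ∀ s : I, (w s).length ≤ l.length := by
    intro s
    by_contra hlt
    push_neg at hlt
    have := (hxs s).1 l.length hlt
    simp [ofList] at this
  have hwpre : ∀ (s : I) (i : ℕ) (hi : i < (w s).length),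
      (w s).get ⟨i, hi⟩ = l.get ⟨i, lt_of_lt_of_le hi (hwlen s)⟩ := by
    intro s i hi
    have := (hxs s).1 i hi
    simp only [ofList] at this
    rw [dif_pos (lt_of_lt_of_le hi (hwlen s))] at this
    exact (Option.some_injective _ this).symm
  have hYGinf : Y ∈ Ginf G := by
    constructor
    · intro n
      rw [hYsome]
      split <;> simp
    · intro n e' f' he hf
      rw [hYsome] at he hf
      by_cases h1 : n + 1 < l.length
      · rw [dif_pos h1] at hf
        rw [dif_pos (by omega)] at he
        cases he; cases hf
        exact List.isChain_iff_getElem.mp hchain n (by omega)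
      · by_cases h2 : n < l.length
        · -- n + 1 = l.length
          have hlen : n + 1 = l.length := by omega
          rw [dif_pos h2] at he
          rw [dif_neg h1] at hf
          cases he; cases hf
          have hne : l ≠ [] := by
            intro hl; rw [hl] at h2; simp at h2
          have hlast : l.get ⟨n, h2⟩ = l.getLast hne := by
            rw [List.getLast_eq_getElem]
            simp only [List.get_eq_getElem]
            congr 1
            omega
          rw [hlast]
          have : n + 1 - l.length = 0 := by omega
          rw [this, hz0]
          exact hf_ext hne
        · rw [dif_neg h2] at he
          rw [dif_neg h1] at hf
          cases he; cases hf
          have : n + 1 - l.length = (n - l.length) + 1 := by omega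
          rw [this]
          exact hzstep _
  refine ⟨⟨Y, hYfull⟩, hYGinf, ?_⟩
  intro s hs
  set s' : I := ⟨s, hs⟩
  rw [show s = (s' : Set ↥(FullShift E)) from rfl, hwF s']
  refine ⟨?_, ?_⟩
  · intro i hi
    show Y i = _
    rw [hYsome, dif_pos (lt_of_lt_of_le hi (hwlen s'))]
    rw [hwpre s' i hi]
  · intro a ha hcon
    replace hcon : Y (w s').length = some a := hcon
    rcases lt_or_eq_of_le (hwlen s') with hlt | heq
    · rw [hYsome, dif_pos hlt] at hcon
      have := (hxs s').2 a ha
      apply this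
      simp only [ofList]
      rw [dif_pos hlt]
      exact hcon
    · rw [hYsome, heq, dif_neg (lt_irrefl _)] at hcon
      simp only [Nat.sub_self, hz0] at hcon
      cases hcon
      exact hf_bad (Set.mem_iUnion.mpr ⟨s', ha⟩)

end Aux

/-- description of the edge shift of an ultragraph with infinitely many
edges in which every range contains a non-sink. -/
theorem edgeShift_eq_of_infinite {V E : Type*} [Countable V] [Countable E] [Infinite E]
    (G : Ultragraph V E) (h : ∀ e : E, ∃ v ∈ G.r e, ∃ f, G.s f = v) :
    edgeShift G =
      {x : ↥(FullShift E) | x.1 ∈ Ginf G} ∪ {x : ↥(FullShift E) | x.1 = ofList []} ∪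
      {x : ↥(FullShift E) | ∃ (l : List E) (hl : l ≠ []),
        l.Chain' (fun e f => G.s f ∈ G.r e) ∧ x.1 = ofList l ∧
        {f : E | G.s f ∈ G.r (l.getLast hl)}.Infinite} := by
  classical
  apply Set.eq_of_subset_of_subset
  · -- closure ⊆ RHS
    intro x hx
    by_contra hxn
    simp only [Set.mem_union, Set.mem_setOf_eq, not_or] at hxn
    obtain ⟨⟨hx1, hx2⟩, hx3⟩ := hxn
    push_neg at hx3
    unfold edgeShift at hx
    rw [mem_closure_iff] at hx
    by_cases hinf : IsInf x.1
    · -- infinite, but not a path: find a bad adjacency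
      have hbadex : ¬ (∀ n e f, x.1 n = some e → x.1 (n + 1) = some f → G.s f ∈ G.r e) :=
        fun hc => hx1 ⟨hinf, hc⟩
      push_neg at hbadex
      obtain ⟨n, e, f, he, hf, hbad⟩ := hbadex
      have hsome : ∀ i, (x.1 i).isSome := fun i => Option.ne_none_iff_isSome.mp (hinf i)
      set wl : List E := List.ofFn (fun i : Fin (n + 2) => (x.1 i).get (hsome i)) with hwl
      have hwlen : wl.length = n + 2 := List.length_ofFn
      have hwget : ∀ (i : ℕ) (hi : i < wl.length), wl.get ⟨i, hi⟩ = (x.1 i).get (hsome i) := by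
        intro i hi
        exact List.get_ofFn _ _
      have hxCyl : x ∈ Subtype.val ⁻¹' Cyl wl (∅ : Finset E) := by
        refine ⟨fun i hi => ?_, fun a ha => by simp at ha⟩
        rw [hwget i hi, Option.some_get]
      obtain ⟨y, hy1, hy2⟩ := hx _ (TopologicalSpace.isOpen_generateFrom_of_mem ⟨wl, ∅, rfl⟩) hxCyl
      have hye : y.1 n = some e := by
        have := hy1.1 n (by omega)
        rw [hwget n (by omega), Option.some_get, he] at this
        exact this
      have hyf : y.1 (n + 1) = some f := by
        have := hy1.1 (n + 1) (by omega)
        rw [hwget (n + 1) (by omega), Option.some_get, hf] at this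
        exact this
      exact hbad (hy2.2 n e f hye hyf)
    · -- finite
      have hmex : ∃ m, x.1 m = none := by
        simp only [IsInf, not_forall, not_not] at hinf
        exact hinf
      set m := Nat.find hmex with hmdef
      have hm : x.1 m = none := Nat.find_spec hmex
      have hmin : ∀ i, i < m → x.1 i ≠ none := fun i hi => Nat.find_min hmex hi
      have hsome : ∀ i : Fin m, (x.1 i).isSome :=
        fun i => Option.ne_none_iff_isSome.mp (hmin i i.2)
      set l : List E := List.ofFn (fun i : Fin m => (x.1 i).get (hsome i)) with hldef
      have hllen : l.length = m := List.length_ofFn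
      have hlget : ∀ (i : ℕ) (hi : i < l.length),
          l.get ⟨i, hi⟩ = (x.1 i).get (hsome ⟨i, hllen ▸ hi⟩) := by
        intro i hi
        exact List.get_ofFn _ _
      have hxeq : x.1 = ofList l := by
        funext n
        by_cases hn : n < m
        · rw [ofList]
          rw [dif_pos (by omega)]
          rw [hlget n (by omega), Option.some_get]
        · have hxn : x.1 n = none := fullShift_none_mono x.2 hm (by omega)
          rw [hxn, ofList, dif_neg (by omega)]
      have hm0 : m ≠ 0 := by
        intro h0
        apply hx2
        funext n
        have hxn : x.1 n = none := fullShift_none_mono x.2 (h0 ▸ hm) (Nat.zero_le n)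
        rw [hxn, ofList]
        simp
      have hlne : l ≠ [] := by
        intro hl0
        rw [hl0] at hllen
        exact hm0 hllen.symm
      by_cases hch : l.Chain' (fun e f => G.s f ∈ G.r e)
      · -- extension set must be finite; derive contradiction via cylinder
        have hfin : {f : E | G.s f ∈ G.r (l.getLast hlne)}.Finite := by
          rw [← Set.not_infinite]
          exact Set.not_infinite.mpr (hx3 l hlne hch hxeq)
        have hxCyl : x ∈ Subtype.val ⁻¹' Cyl l hfin.toFinset := by
          refine ⟨fun i hi => ?_, fun a ha => ?_⟩
          · rw [hxeq, ofList, dif_pos hi]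
          · rw [hxeq, ofList, dif_neg (lt_irrefl _)]
            simp
        obtain ⟨y, hy1, hy2⟩ :=
          hx _ (TopologicalSpace.isOpen_generateFrom_of_mem ⟨l, hfin.toFinset, rfl⟩) hxCyl
        obtain ⟨hyinf, hyadj⟩ := hy2
        have h1 : y.1 (m - 1) = some (l.getLast hlne) := by
          have := hy1.1 (m - 1) (by omega)
          rw [this]
          congr 1
          rw [List.getLast_eq_getElem]
          simp only [List.get_eq_getElem]
          congr 1
          omega
        obtain ⟨f, hf⟩ : ∃ f, y.1 m = some f := by
          cases hyy : y.1 m with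
          | none => exact absurd hyy (hyinf m)
          | some f => exact ⟨f, rfl⟩
        have hmem : G.s f ∈ G.r (l.getLast hlne) := by
          have := hyadj (m - 1) _ f h1 (by rw [show m - 1 + 1 = m by omega]; exact hf)
          exact this
        refine hy1.2 f (hfin.mem_toFinset.mpr hmem) ?_
        rw [hllen]
        exact hf
      · -- broken chain
        rw [List.Chain', List.isChain_iff_getElem] at hch
        push_neg at hch
        obtain ⟨i, hi, hbad⟩ := hch
        have hxCyl : x ∈ Subtype.val ⁻¹' Cyl l (∅ : Finset E) := by
          refine ⟨fun j hj => ?_, fun a ha => by simp at ha⟩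
          rw [hxeq, ofList, dif_pos hj]
        obtain ⟨y, hy1, hy2⟩ :=
          hx _ (TopologicalSpace.isOpen_generateFrom_of_mem ⟨l, ∅, rfl⟩) hxCyl
        apply hbad
        exact hy2.2 i _ _ (hy1.1 i (by omega)) (hy1.1 (i + 1) (by omega))
  · -- RHS ⊆ closure
    intro x hx
    rcases hx with (hx | hx) | hx
    · exact subset_closure hx
    · have hx' : x = ⟨ofList [], ofList_mem []⟩ := Subtype.ext hx
      rw [hx']
      apply mem_edgeShift_of_chain G h [] List.isChain_nil
      have huniv : {f : E | ∀ hl : ([] : List E) ≠ [], G.s f ∈ G.r (([] : List E).getLast hl)}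
          = Set.univ := by
        ext f
        simp
      rw [huniv]
      exact Set.infinite_univ
    · obtain ⟨l, hl, hch, hxeq, hext⟩ := hx
      have hx' : x = ⟨ofList l, ofList_mem l⟩ := Subtype.ext hxeq
      rw [hx']
      apply mem_edgeShift_of_chain G h l hch
      exact hext.mono fun f hf hl' => hf

end OTW
end

section
/- Let X be a shift of finite type over a countably infinite alphabet, conjugate to the edge shift Y_E of a graph E. Then all but finitely many of the length-one elements of Y_E are loops in E (edges with equal source and range), all with the same range vertex. -/
namespace OTW

variable {A : Type*}

section Helpers

open Filter Topology

variable {A : Type*}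

theorem ofList_eval_lt (l : List A) {n : ℕ} (h : n < l.length) :
    ofList l n = some (l.get ⟨n, h⟩) := dif_pos h

theorem ofList_eval_ge (l : List A) {n : ℕ} (h : ¬ n < l.length) : ofList l n = none :=
  dif_neg h

theorem tail_none {x : ℕ → Option A} (hx : x ∈ FullShift A) {k : ℕ} (h : x k = none) :
    ∀ n, k ≤ n → x n = none := by
  intro n hn
  induction n with
  | zero => exact (Nat.le_zero.1 hn) ▸ h
  | succ m ih =>
    rcases Nat.lt_or_ge k (m + 1) with h1 | h1
    · exact hx m (ih (by omega))
    · exact (Nat.le_antisymm hn h1) ▸ h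

theorem len_le {x : ℕ → Option A} {n : ℕ} (h : x n = none) : len x ≤ (n : ℕ∞) :=
  iInf₂_le n h

theorem le_len {x : ℕ → Option A} {k : ℕ∞} (h : ∀ n, x n = none → k ≤ (n : ℕ∞)) :
    k ≤ len x :=
  le_iInf₂ h

theorem len_ofSeq (y : ℕ → A) : len (ofSeq y) = ⊤ := by
  simp [len, ofSeq]

theorem isInf_of_len {x : ℕ → Option A} (h : len x = ⊤) : IsInf x := by
  intro n hn
  have h1 := len_le hn
  rw [h] at h1
  exact absurd h1 (ENat.coe_lt_top n).not_ge

theorem len_eq_coe {x : ℕ → Option A} {k : ℕ} (h1 : x k = none)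
    (h2 : ∀ i, i < k → x i ≠ none) : len x = (k : ℕ∞) := by
  refine le_antisymm (len_le h1) (le_len fun n hn => ?_)
  have : k ≤ n := by
    by_contra hlt
    exact h2 n (by omega) hn
  exact_mod_cast this

theorem len_ofList (l : List A) : len (ofList l) = (l.length : ℕ∞) := by
  refine len_eq_coe (ofList_eval_ge l (by omega)) fun i hi => ?_
  rw [ofList_eval_lt l hi]
  simp

theorem len_one_struct {x : ℕ → Option A} (hx : x ∈ FullShift A)
    (h : len x = ((1 : ℕ) : ℕ∞)) : ∃ a, x = ofList [a] := by
  have h0 : x 0 ≠ none := by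
    intro hn
    have := len_le hn
    rw [h] at this
    exact absurd this (by exact_mod_cast Nat.not_succ_le_zero 0)
  have h1 : x 1 = none := by
    by_contra hn
    have : ((2 : ℕ) : ℕ∞) ≤ len x := by
      refine le_len fun n hnone => ?_
      have : 2 ≤ n := by
        rcases n with _ | _ | m
        · exact absurd hnone h0
        · exact absurd hnone hn
        · omega
      exact_mod_cast this
    rw [h] at this
    exact absurd this (by exact_mod_cast (by omega : ¬ (2 : ℕ) ≤ 1))
  obtain ⟨a, ha⟩ := Option.ne_none_iff_exists'.1 h0
  refine ⟨a, funext fun n => ?_⟩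
  rcases n with _ | m
  · rw [ha, ofList_eval_lt [a] (by simp)]
    rfl
  · rw [tail_none hx h1 (m + 1) (by omega), ofList_eval_ge]
    simp

theorem shift_ofList_cons (a : A) (l : List A) :
    (fun n => ofList (a :: l) (n + 1)) = ofList l := by
  funext n
  by_cases h : n < l.length
  · rw [ofList_eval_lt l h, ofList_eval_lt (a :: l) (by simp; omega)]
    rfl
  · rw [ofList_eval_ge l h, ofList_eval_ge (a :: l) (by simp; omega)]

end Helpers
section Helpers2

open Filter Topology

variable {A : Type*}

theorem isOpen_cylP (w : List A) (F : Finset A) :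
    IsOpen (Subtype.val ⁻¹' Cyl w F : Set ↥(FullShift A)) :=
  TopologicalSpace.isOpen_generateFrom_of_mem ⟨w, F, rfl⟩

theorem tendsto_fullShift {f : ℕ → ↥(FullShift A)} {L : ↥(FullShift A)}
    (h : ∀ w F, L.1 ∈ Cyl w F → ∀ᶠ n in atTop, (f n).1 ∈ Cyl w F) :
    Tendsto f atTop (𝓝 L) := by
  have hn : (𝓝 L : Filter ↥(FullShift A)) =
      ⨅ s ∈ {s | L ∈ s ∧ s ∈ {S | ∃ w F, S = Subtype.val ⁻¹' Cyl w F}}, 𝓟 s :=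
    TopologicalSpace.nhds_generateFrom
  rw [hn]
  rw [tendsto_iInf]
  intro s
  rw [tendsto_iInf]
  rintro ⟨hLs, w, F, rfl⟩
  rw [tendsto_principal]
  exact h w F hLs

theorem eventually_cyl {Y : Set ↥(FullShift A)} {q : ℕ → ↥Y} {L : ↥Y}
    (hq : Tendsto q atTop (𝓝 L)) {w : List A} {F : Finset A} (hL : L.1.1 ∈ Cyl w F) :
    ∀ᶠ n in atTop, (q n).1.1 ∈ Cyl w F :=
  hq (((isOpen_cylP w F).preimage continuous_subtype_val).mem_nhds hL)

theorem ginf_approx {V E : Type*} (G : Ultragraph V E) {x : ↥(FullShift E)}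
    (hx : x ∈ edgeShift G) {w : List E} {F : Finset E} (hxw : x.1 ∈ Cyl w F) :
    ∃ q : ↥(FullShift E), q.1 ∈ Cyl w F ∧ q.1 ∈ Ginf G := by
  obtain ⟨q, hq1, hq2⟩ := (mem_closure_iff.1 hx) _ (isOpen_cylP w F) hxw
  exact ⟨q, hq1, hq2⟩

theorem mem_cyl_nil {x : ℕ → Option A} (F : Finset A) (h : ∀ a ∈ F, x 0 ≠ some a) :
    x ∈ Cyl ([] : List A) F :=
  ⟨fun i hi => absurd hi (Nat.not_lt_zero i), h⟩

theorem mem_cyl_single {x : ℕ → Option A} {a : A} (F : Finset A) (h0 : x 0 = some a)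
    (h1 : ∀ b ∈ F, x 1 ≠ some b) : x ∈ Cyl [a] F := by
  refine ⟨fun i hi => ?_, h1⟩
  have hi0 : i = 0 := by simpa using hi
  subst hi0
  exact h0

theorem mem_cyl_pair {x : ℕ → Option A} {a b : A} (h0 : x 0 = some a)
    (h1 : x 1 = some b) : x ∈ Cyl [a, b] ∅ := by
  refine ⟨fun i hi => ?_, by simp⟩
  have hi2 : i < 2 := by simpa using hi
  match i, hi2 with
  | 0, _ => exact h0
  | 1, _ => exact h1

theorem cyl_one_cases {a : A} {w : List A} {F : Finset A} (h : ofList [a] ∈ Cyl w F) :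
    (w = [] ∧ a ∉ F) ∨ w = [a] := by
  match w with
  | [] =>
    refine Or.inl ⟨rfl, fun hmem => ?_⟩
    exact h.2 a hmem (by rw [ofList_eval_lt [a] (by simp)]; rfl)
  | [b] =>
    refine Or.inr ?_
    have := h.1 0 (by simp)
    rw [ofList_eval_lt [a] (by simp)] at this
    simp only [List.get] at this
    obtain rfl : a = b := by simpa using this
    rfl
  | b :: c :: t =>
    have := h.1 1 (by simp)
    rw [ofList_eval_ge [a] (by simp)] at this
    exact absurd this.symm (Option.some_ne_none _)

theorem ev_not_mem {f : ℕ → A} (hf : Function.Injective f) (F : Finset A) :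
    ∀ᶠ n in atTop, f n ∉ F := by
  have hfin : (f ⁻¹' (F : Set A)).Finite := F.finite_toSet.preimage hf.injOn
  have h2 := hfin.eventually_cofinite_notMem
  rw [Nat.cofinite_eq_atTop] at h2
  exact h2

end Helpers2
section Helpers3

variable {A : Type*} {Fw : Set (List A)}

theorem ofSeq_mem_XFinf (hne : [] ∉ Fw) {y : ℕ → A}
    (hy : ∀ n, ∀ w ∈ Fw, y n ∉ w) : ofSeq y ∈ XFinf Fw := by
  refine ⟨fun n => by simp [ofSeq], ?_⟩
  intro w hw k hblk
  have hwne : w ≠ [] := fun h => hne (h ▸ hw)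
  have hlen : 0 < w.length := List.length_pos_iff.2 hwne
  have h0 := hblk 0 hlen
  simp only [ofSeq, Option.some.injEq] at h0
  exact hy (k + 0) w hw (h0 ▸ w.get_mem _)

theorem seqAC_mem_XFinf (hne : [] ∉ Fw) {a c : A} (ha : [a] ∉ Fw)
    (hc : ∀ w ∈ Fw, c ∉ w) :
    ofSeq (fun n => if n = 0 then a else c) ∈ XFinf Fw := by
  refine ⟨fun n => by simp [ofSeq], ?_⟩
  intro w hw k hblk
  have hwne : w ≠ [] := fun h => hne (h ▸ hw)
  have hlen : 0 < w.length := List.length_pos_iff.2 hwne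
  have h0 := hblk 0 hlen
  simp only [ofSeq, Option.some.injEq] at h0
  rcases Nat.eq_zero_or_pos k with rfl | hk
  · rcases Nat.lt_or_ge 1 w.length with h2 | h2
    · have h1 := hblk 1 h2
      simp only [ofSeq, Option.some.injEq] at h1
      rw [show (if (0:ℕ) + 1 = 0 then a else c) = c by simp] at h1
      exact hc w hw (h1 ▸ w.get_mem _)
    · have hw1 : w.length = 1 := by omega
      obtain ⟨b, rfl⟩ := List.length_eq_one_iff.1 hw1
      have : b = a := by simpa using h0.symm
      subst this
      exact ha hw
  · have : (if k + 0 = 0 then a else c) = c := by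
      rw [if_neg (by omega)]
    rw [this] at h0
    exact hc w hw (h0 ▸ w.get_mem _)

theorem seq3_mem_XFinf (hne : [] ∉ Fw) {c d b : A} (hc : ∀ w ∈ Fw, c ∉ w)
    (hd : [d] ∉ Fw) (hb : ∀ w ∈ Fw, b ∉ w) :
    ofSeq (fun n => if n = 0 then c else if n = 1 then d else b) ∈ XFinf Fw := by
  refine ⟨fun n => by simp [ofSeq], ?_⟩
  intro w hw k hblk
  have hwne : w ≠ [] := fun h => hne (h ▸ hw)
  have hlen : 0 < w.length := List.length_pos_iff.2 hwne
  have h0 := hblk 0 hlen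
  simp only [ofSeq, Option.some.injEq] at h0
  rcases Nat.lt_or_ge k 2 with hk | hk
  · rcases Nat.eq_zero_or_pos k with rfl | hk1
    · have : (if (0:ℕ) + 0 = 0 then c else if (0:ℕ) + 0 = 1 then d else b) = c := by simp
      rw [this] at h0
      exact hc w hw (h0 ▸ w.get_mem _)
    · have hk1' : k = 1 := by omega
      subst hk1'
      rcases Nat.lt_or_ge 1 w.length with h2 | h2
      · have h1 := hblk 1 h2
        simp only [ofSeq, Option.some.injEq] at h1
        rw [show (if (1:ℕ) + 1 = 0 then c else if (1:ℕ) + 1 = 1 then d else b) = b by simp] at h1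
        exact hb w hw (h1 ▸ w.get_mem _)
      · have hw1 : w.length = 1 := by omega
        obtain ⟨u, rfl⟩ := List.length_eq_one_iff.1 hw1
        have : u = d := by simpa using h0.symm
        subst this
        exact hd hw
  · have : (if k + 0 = 0 then c else if k + 0 = 1 then d else b) = b := by
      rw [if_neg (by omega), if_neg (by omega)]
    rw [this] at h0
    exact hb w hw (h0 ▸ w.get_mem _)

theorem listCat_two_eq (a b : A) :
    listCat ([a] ++ [b]) (fun _ => b) = ofSeq (fun n => if n = 0 then a else b) := by
  funext n
  rcases n with _ | _ | m
  · simp [listCat, ofSeq]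
  · simp [listCat, ofSeq]
  · simp only [listCat, ofSeq]
    rw [dif_neg (by simp)]
    simp

theorem listCat_three_eq (c d b : A) :
    listCat ([c, d] ++ [b]) (fun _ => b) =
      ofSeq (fun n => if n = 0 then c else if n = 1 then d else b) := by
  funext n
  rcases n with _ | _ | _ | m
  · simp [listCat, ofSeq]
  · simp [listCat, ofSeq]
  · simp [listCat, ofSeq]
  · simp only [listCat, ofSeq]
    rw [dif_neg (by simp)]
    simp

theorem ofList_one_mem_XFfin (hne : [] ∉ Fw) {a : A} (ha : [a] ∉ Fw)
    (hFree : {b : A | ∀ w ∈ Fw, b ∉ w}.Infinite) : ofList [a] ∈ XFfin Fw := by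
  refine ⟨[a], rfl, hFree.mono fun b hb => ?_⟩
  exact ⟨fun _ => b, by rw [listCat_two_eq]; exact seqAC_mem_XFinf hne ha hb⟩

theorem ofList_two_mem_XFfin (hne : [] ∉ Fw) {c d : A} (hc : ∀ w ∈ Fw, c ∉ w)
    (hd : [d] ∉ Fw) (hFree : {b : A | ∀ w ∈ Fw, b ∉ w}.Infinite) :
    ofList [c, d] ∈ XFfin Fw := by
  refine ⟨[c, d], rfl, hFree.mono fun b hb => ?_⟩
  exact ⟨fun _ => b, by rw [listCat_three_eq]; exact seq3_mem_XFinf hne hc hd hb⟩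

theorem XF_one_fin {a : A} (h : ofList [a] ∈ XF Fw) : ofList [a] ∈ XFfin Fw := by
  rcases h with h | h
  · exact absurd (ofList_eval_ge [a] (by simp)) (h.1 1)
  · exact h

theorem one_not_forbidden {a : A} (h : ofList [a] ∈ XFfin Fw) : [a] ∉ Fw := by
  obtain ⟨w, hw, hinf⟩ := h
  obtain ⟨b, y, hy⟩ := hinf.nonempty
  intro hmem
  have hw0 : w.length > 0 := by
    by_contra h0
    have := congrFun hw 0
    rw [ofList_eval_lt [a] (by simp), ofList_eval_ge w (by omega)] at this
    exact Option.some_ne_none _ this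
  have hget : w.get ⟨0, hw0⟩ = a := by
    have := congrFun hw 0
    rw [ofList_eval_lt [a] (by simp), ofList_eval_lt w hw0] at this
    simpa using this.symm
  refine hy.2 [a] hmem 0 ?_
  intro i hi
  have hi0 : i = 0 := by simpa using hi
  subst hi0
  have h02 : (0:ℕ) < (w ++ [b]).length := by simp
  simp only [listCat]
  rw [dif_pos (by simpa using h02)]
  have hga : (w ++ [b]).get ⟨0, by simpa using h02⟩ = w.get ⟨0, hw0⟩ :=
    by simp [List.getElem_append_left hw0]
  rw [hga, hget]
  rfl

end Helpers3
section Helpers4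

theorem inf_mem_Ginf {V E : Type*} (G : Ultragraph V E) {x : ↥(FullShift E)}
    (hx : x ∈ edgeShift G) (hinf : IsInf x.1) : x.1 ∈ Ginf G := by
  refine ⟨hinf, ?_⟩
  intro n e f hxn hxn1
  have hsome : ∀ i : Fin (n + 2), (x.1 (i : ℕ)).isSome :=
    fun i => Option.ne_none_iff_isSome.1 (hinf i)
  set w : List E := List.ofFn (fun i : Fin (n + 2) => (x.1 (i : ℕ)).get (hsome i)) with hw
  have hlen : w.length = n + 2 := by simp [hw]
  have hxw : x.1 ∈ Cyl w (∅ : Finset E) := by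
    refine ⟨fun i hi => ?_, by simp⟩
    rw [List.get_ofFn]
    simp [Option.some_get]
  obtain ⟨q, hq, hqG⟩ := ginf_approx G hx hxw
  have key : ∀ i (hi : i < n + 2), q.1 i = x.1 i := by
    intro i hi
    rw [hq.1 i (by omega : i < w.length)]
    rw [List.get_ofFn]
    simp [Option.some_get]
  have h1 : q.1 n = some e := by rw [key n (by omega)]; exact hxn
  have h2 : q.1 (n + 1) = some f := by rw [key (n + 1) (by omega)]; exact hxn1
  exact hqG.2 n e f h1 h2

end Helpers4
theorem ofList_single_zero {A : Type*} (b : A) : ofList [b] 0 = some b := by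
  rw [ofList_eval_lt [b] (by simp)]
  rfl
open Filter Topology in
/-- if a shift of finite type over an infinite alphabet is conjugate to the
edge shift of a graph, then all but finitely many length-one elements of the edge shift are
loops, and all length-one elements have the same range. -/
theorem loops_cofinite_of_conjugacy {A V E : Type*} [Countable A] [Infinite A]
    [Countable V] [Countable E]
    (Fw : Set (List A)) (hFw : Fw.Finite) (hne : [] ∉ Fw) (G : DirGraph V E)
    (phi : ↥{x : ↥(FullShift A) | x.1 ∈ XF Fw} → ↥(edgeShift G.toUltragraph))
    (hphi : IsConjugacy {x : ↥(FullShift A) | x.1 ∈ XF Fw} (edgeShift G.toUltragraph) phi) :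
    {e : E | word1 e ∈ edgeShift G.toUltragraph ∧ G.s e ≠ G.r e}.Finite ∧
    ∀ e f : E, word1 e ∈ edgeShift G.toUltragraph → word1 f ∈ edgeShift G.toUltragraph →
      G.r e = G.r f := by
  classical
  -- the cofinite set of "free" letters, not occurring in any forbidden word
  have hLfin : {a : A | ∃ w ∈ Fw, a ∈ w}.Finite := by
    have h1 : {a : A | ∃ w ∈ Fw, a ∈ w} = ⋃ w ∈ Fw, {a | a ∈ w} := by
      ext a; simp
    rw [h1]
    exact hFw.biUnion fun w _ => w.finite_toSet
  have hFreeInf : {a : A | ∀ w ∈ Fw, a ∉ w}.Infinite := by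
    have h2 := hLfin.infinite_compl
    have h3 : {a : A | ∃ w ∈ Fw, a ∈ w}ᶜ = {a : A | ∀ w ∈ Fw, a ∉ w} := by
      ext a; simp
    rwa [h3] at h2
  -- an injective enumeration of free letters
  obtain ⟨cc, hccfree, hccinj⟩ : ∃ cc : ℕ → A, (∀ n, ∀ w ∈ Fw, cc n ∉ w) ∧
      Function.Injective cc := by
    obtain ⟨emb⟩ : Nonempty (ℕ ↪ {a : A | ∀ w ∈ Fw, a ∉ w}) := ⟨hFreeInf.natEmbedding⟩
    exact ⟨fun n => (emb n).1, fun n => (emb n).2, fun m n h => emb.injective (Subtype.ext h)⟩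
  have hcinfX : ∀ n, ofSeq (fun _ => cc n) ∈ XF Fw :=
    fun n => Or.inl (ofSeq_mem_XFinf hne fun m => hccfree n)
  -- every length-one element of the edge shift is the image of a length-one word
  have keyinv : ∀ (e : E), word1 e ∈ edgeShift G.toUltragraph →
      ∃ a : A, (ofList [a] ∈ XF Fw) ∧
        ∀ hh : ofList [a] ∈ XF Fw,
          (phi ⟨⟨ofList [a], ofList_mem [a]⟩, hh⟩).1 = word1 e := by
    intro e he
    obtain ⟨x, hx⟩ := hphi.bijective.2 ⟨word1 e, he⟩
    have hlen1 : len x.1.1 = ((1 : ℕ) : ℕ∞) := by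
      have h4 := hphi.len_eq x
      rw [hx] at h4
      rw [← h4]
      show len (ofList [e]) = _
      rw [len_ofList]
      rfl
    obtain ⟨a, ha⟩ := len_one_struct x.1.2 hlen1
    have hmem : ofList [a] ∈ XF Fw := by rw [← ha]; exact x.2
    refine ⟨a, hmem, fun hh => ?_⟩
    have hxx : (⟨⟨ofList [a], ofList_mem [a]⟩, hh⟩ :
        ↥{x : ↥(FullShift A) | x.1 ∈ XF Fw}) = x :=
      Subtype.ext (Subtype.ext ha.symm)
    rw [hxx, hx]
  -- main step: the range of any length-one element is eventually the source of the
  -- first edge of the image of a constant free sequence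
  have main2 : ∀ e : E, word1 e ∈ edgeShift G.toUltragraph →
      ∀ᶠ n in atTop, ∀ g : E,
        (phi ⟨⟨ofSeq (fun _ => cc n), ofSeq_mem _⟩, hcinfX n⟩).1.1 0 = some g →
        G.r e = G.s g := by
    intro e he
    obtain ⟨a, haXF, haphi⟩ := keyinv e he
    have haFw : [a] ∉ Fw := one_not_forbidden (XF_one_fin haXF)
    have hseqXF : ∀ n, ofSeq (fun m => if m = 0 then a else cc n) ∈ XF Fw :=
      fun n => Or.inl (seqAC_mem_XFinf hne haFw (hccfree n))
    have hval0 : ∀ n, ofSeq (fun m => if m = 0 then a else cc n) 0 = some a :=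
      fun n => by simp [ofSeq]
    have hval1 : ∀ n, ofSeq (fun m => if m = 0 then a else cc n) 1 = some (cc n) :=
      fun n => by simp [ofSeq]
    have htendX : Tendsto
        (fun n => (⟨⟨ofSeq (fun m => if m = 0 then a else cc n), ofSeq_mem _⟩, hseqXF n⟩ :
          ↥{x : ↥(FullShift A) | x.1 ∈ XF Fw})) atTop
        (𝓝 (⟨⟨ofList [a], ofList_mem [a]⟩, haXF⟩ :
          ↥{x : ↥(FullShift A) | x.1 ∈ XF Fw})) := by
      rw [tendsto_subtype_rng]
      refine tendsto_fullShift ?_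
      intro w F hmem
      rcases cyl_one_cases hmem with ⟨rfl, haF⟩ | rfl
      · refine Eventually.of_forall fun n => mem_cyl_nil F fun b hb hceq => ?_
        obtain rfl := Option.some.inj ((hval0 n).symm.trans hceq)
        exact haF hb
      · refine (ev_not_mem hccinj F).mono fun n hn => mem_cyl_single F (hval0 n) ?_
        intro b hb hceq
        obtain rfl := Option.some.inj ((hval1 n).symm.trans hceq)
        exact hn hb
    have haphifull : phi ⟨⟨ofList [a], ofList_mem [a]⟩, haXF⟩ = ⟨word1 e, he⟩ :=
      Subtype.ext (haphi haXF)
    have htendY := (hphi.continuous.tendsto _).comp htendX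
    rw [haphifull] at htendY
    have hev := eventually_cyl htendY
      (show ((⟨word1 e, he⟩ : ↥(edgeShift G.toUltragraph))).1.1 ∈ Cyl [e] (∅ : Finset E)
        from mem_cyl_single ∅ (ofList_single_zero e) (by simp))
    refine hev.mono fun n hn => ?_
    intro g hg
    have hshv : shiftMap (⟨⟨ofSeq (fun m => if m = 0 then a else cc n), ofSeq_mem _⟩,
        hseqXF n⟩ : ↥{x : ↥(FullShift A) | x.1 ∈ XF Fw}).1 =
        ⟨ofSeq (fun _ => cc n), ofSeq_mem _⟩ :=
      Subtype.ext (funext fun m => by simp [shiftMap, ofSeq])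
    have hcomm := hphi.shift_comm
      ⟨⟨ofSeq (fun m => if m = 0 then a else cc n), ofSeq_mem _⟩, hseqXF n⟩
    have helt : (⟨shiftMap (⟨⟨ofSeq (fun m => if m = 0 then a else cc n), ofSeq_mem _⟩,
        hseqXF n⟩ : ↥{x : ↥(FullShift A) | x.1 ∈ XF Fw}).1,
          hphi.shiftInvX _⟩ : ↥{x : ↥(FullShift A) | x.1 ∈ XF Fw}) =
        ⟨⟨ofSeq (fun _ => cc n), ofSeq_mem _⟩, hcinfX n⟩ :=
      Subtype.ext hshv
    rw [helt] at hcomm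
    have h1 : (phi ⟨⟨ofSeq (fun m => if m = 0 then a else cc n), ofSeq_mem _⟩,
        hseqXF n⟩).1.1 1 = some g := by
      have h6 := congrFun (congrArg Subtype.val hcomm) 0
      exact h6.symm.trans hg
    have h0 : (phi ⟨⟨ofSeq (fun m => if m = 0 then a else cc n), ofSeq_mem _⟩,
        hseqXF n⟩).1.1 0 = some e := hn.1 0 (by simp)
    have hinfy : IsInf (phi ⟨⟨ofSeq (fun m => if m = 0 then a else cc n), ofSeq_mem _⟩,
        hseqXF n⟩).1.1 :=
      isInf_of_len (by rw [hphi.len_eq]; exact len_ofSeq _)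
    have hG := (inf_mem_Ginf _ (phi ⟨⟨ofSeq (fun m => if m = 0 then a else cc n),
        ofSeq_mem _⟩, hseqXF n⟩).2 hinfy).2 0 e g h0 h1
    have : G.s g = G.r e := by simpa [DirGraph.toUltragraph] using hG
    exact this.symm
  -- all length-one elements have the same range
  have part2 : ∀ e f : E, word1 e ∈ edgeShift G.toUltragraph →
      word1 f ∈ edgeShift G.toUltragraph → G.r e = G.r f := by
    intro e f he hf
    obtain ⟨n, hne', hnf⟩ := ((main2 e he).and (main2 f hf)).exists
    have hinfz : IsInf (phi ⟨⟨ofSeq (fun _ => cc n), ofSeq_mem _⟩, hcinfX n⟩).1.1 :=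
      isInf_of_len (by rw [hphi.len_eq]; exact len_ofSeq _)
    rcases hzg : (phi ⟨⟨ofSeq (fun _ => cc n), ofSeq_mem _⟩, hcinfX n⟩).1.1 0 with _ | g
    · exact absurd hzg (hinfz 0)
    · rw [hne' g hzg, hnf g hzg]
  refine ⟨?_, part2⟩
  -- part 1: finiteness of non-loops
  have hc0free := hccfree 0
  have hc0Fw : [cc 0] ∉ Fw := fun h => hc0free _ h (by simp)
  have hcXF : ofList [cc 0] ∈ XF Fw := Or.inr (ofList_one_mem_XFfin hne hc0Fw hFreeInf)
  have hlenc : len (phi ⟨⟨ofList [cc 0], ofList_mem _⟩, hcXF⟩).1.1 = ((1 : ℕ) : ℕ∞) := by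
    rw [hphi.len_eq]
    show len (ofList [cc 0]) = _
    rw [len_ofList]
    rfl
  obtain ⟨ec, hec⟩ := len_one_struct (phi ⟨⟨ofList [cc 0], ofList_mem _⟩, hcXF⟩).1.2 hlenc
  have hecY : word1 ec ∈ edgeShift G.toUltragraph := by
    have h5 := (phi ⟨⟨ofList [cc 0], ofList_mem _⟩, hcXF⟩).2
    rwa [show (phi ⟨⟨ofList [cc 0], ofList_mem _⟩, hcXF⟩).1 = word1 ec from
      Subtype.ext hec] at h5
  -- the finite exceptional set
  have hTfin : {d : A | ∃ hX2 : ofList [cc 0, d] ∈ XF Fw,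
      (phi ⟨⟨ofList [cc 0, d], ofList_mem _⟩, hX2⟩).1.1 0 ≠ some ec}.Finite := by
    by_contra hTinf
    replace hTinf : {d : A | ∃ hX2 : ofList [cc 0, d] ∈ XF Fw,
        (phi ⟨⟨ofList [cc 0, d], ofList_mem _⟩, hX2⟩).1.1 0 ≠ some ec}.Infinite := hTinf
    obtain ⟨dd, hddT, hddinj⟩ : ∃ dd : ℕ → A,
        (∀ n, dd n ∈ {d : A | ∃ hX2 : ofList [cc 0, d] ∈ XF Fw,
          (phi ⟨⟨ofList [cc 0, d], ofList_mem _⟩, hX2⟩).1.1 0 ≠ some ec}) ∧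
        Function.Injective dd := by
      obtain ⟨emb⟩ : Nonempty (ℕ ↪ {d : A | ∃ hX2 : ofList [cc 0, d] ∈ XF Fw,
          (phi ⟨⟨ofList [cc 0, d], ofList_mem _⟩, hX2⟩).1.1 0 ≠ some ec}) :=
        ⟨hTinf.natEmbedding⟩
      exact ⟨fun n => (emb n).1, fun n => (emb n).2,
        fun m n h => emb.injective (Subtype.ext h)⟩
    have hcdXF : ∀ n, ofList [cc 0, dd n] ∈ XF Fw := fun n => (hddT n).choose
    have htendX : Tendsto
        (fun n => (⟨⟨ofList [cc 0, dd n], ofList_mem _⟩, hcdXF n⟩ :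
          ↥{x : ↥(FullShift A) | x.1 ∈ XF Fw})) atTop
        (𝓝 (⟨⟨ofList [cc 0], ofList_mem _⟩, hcXF⟩ :
          ↥{x : ↥(FullShift A) | x.1 ∈ XF Fw})) := by
      rw [tendsto_subtype_rng]
      refine tendsto_fullShift ?_
      intro w F hmem
      rcases cyl_one_cases hmem with ⟨rfl, haF⟩ | rfl
      · refine Eventually.of_forall fun n => mem_cyl_nil F fun b hb hceq => ?_
        obtain rfl := Option.some.inj
          ((ofList_eval_lt [cc 0, dd n] (show (0:ℕ) < 2 by norm_num)).symm.trans hceq)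
        exact haF hb
      · refine (ev_not_mem hddinj F).mono fun n hn => mem_cyl_single F
          (ofList_eval_lt [cc 0, dd n] (show (0:ℕ) < 2 by norm_num)) ?_
        intro b hb hceq
        obtain rfl := Option.some.inj
          ((ofList_eval_lt [cc 0, dd n] (show (1:ℕ) < 2 by norm_num)).symm.trans hceq)
        exact hn hb
    have htendY := (hphi.continuous.tendsto _).comp htendX
    have hev := eventually_cyl htendY
      (show (phi ⟨⟨ofList [cc 0], ofList_mem _⟩, hcXF⟩).1.1 ∈ Cyl [ec] (∅ : Finset E)
        from by rw [hec]; exact mem_cyl_single ∅ (ofList_single_zero ec) (by simp))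
    obtain ⟨n, hn⟩ := hev.exists
    exact (hddT n).choose_spec (hn.1 0 (by simp))
  -- every non-loop length-one element comes from an exceptional letter
  have hSsub : ∀ e ∈ {e : E | word1 e ∈ edgeShift G.toUltragraph ∧ G.s e ≠ G.r e},
      ∃ a, a ∈ {d : A | ∃ hX2 : ofList [cc 0, d] ∈ XF Fw,
          (phi ⟨⟨ofList [cc 0, d], ofList_mem _⟩, hX2⟩).1.1 0 ≠ some ec} ∧
        (ofList [a] ∈ XF Fw) ∧
        ∀ hh : ofList [a] ∈ XF Fw,
          (phi ⟨⟨ofList [a], ofList_mem [a]⟩, hh⟩).1 = word1 e := by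
    intro e he'
    obtain ⟨a, haXF, haphi⟩ := keyinv e he'.1
    refine ⟨a, ?_, haXF, haphi⟩
    by_contra haT
    have haFw : [a] ∉ Fw := one_not_forbidden (XF_one_fin haXF)
    have hcdXF2 : ofList [cc 0, a] ∈ XF Fw :=
      Or.inr (ofList_two_mem_XFfin hne hc0free haFw hFreeInf)
    have h0' : (phi ⟨⟨ofList [cc 0, a], ofList_mem _⟩, hcdXF2⟩).1.1 0 = some ec := by
      by_contra hcon
      exact haT ⟨hcdXF2, hcon⟩
    have hshv : shiftMap (⟨⟨ofList [cc 0, a], ofList_mem _⟩, hcdXF2⟩ :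
        ↥{x : ↥(FullShift A) | x.1 ∈ XF Fw}).1 = ⟨ofList [a], ofList_mem [a]⟩ :=
      Subtype.ext (shift_ofList_cons (cc 0) [a])
    have hcomm := hphi.shift_comm ⟨⟨ofList [cc 0, a], ofList_mem _⟩, hcdXF2⟩
    have helt2 : (⟨shiftMap (⟨⟨ofList [cc 0, a], ofList_mem _⟩, hcdXF2⟩ :
        ↥{x : ↥(FullShift A) | x.1 ∈ XF Fw}).1, hphi.shiftInvX _⟩ :
          ↥{x : ↥(FullShift A) | x.1 ∈ XF Fw}) = ⟨⟨ofList [a], ofList_mem [a]⟩, haXF⟩ :=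
      Subtype.ext hshv
    rw [helt2] at hcomm
    rw [haphi haXF] at hcomm
    have h1' : (phi ⟨⟨ofList [cc 0, a], ofList_mem _⟩, hcdXF2⟩).1.1 1 = some e := by
      have h7 := congrFun (congrArg Subtype.val hcomm.symm) 0
      exact h7.trans (ofList_single_zero e)
    obtain ⟨qq, hqq, hqqG⟩ := ginf_approx _
      (phi ⟨⟨ofList [cc 0, a], ofList_mem _⟩, hcdXF2⟩).2 (mem_cyl_pair h0' h1')
    have hq0 : qq.1 0 = some ec := hqq.1 0 (by simp)
    have hq1 : qq.1 1 = some e := hqq.1 1 (by simp)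
    have hGs := hqqG.2 0 ec e hq0 hq1
    have hse : G.s e = G.r ec := by simpa [DirGraph.toUltragraph] using hGs
    exact he'.2 (by rw [hse, part2 ec e hecY he'.1])
  choose! f hfT hfmem hfspec using hSsub
  refine Set.Finite.of_finite_image (f := f) (hTfin.subset ?_) ?_
  · rintro _ ⟨e, he', rfl⟩
    exact hfT e he'
  · intro e1 h1 e2 h2 hfe
    have p1 := hfspec e1 h1 (hfmem e1 h1)
    have p2 := hfspec e2 h2 (hfmem e2 h2)
    have hXX : (⟨⟨ofList [f e1], ofList_mem [f e1]⟩, hfmem e1 h1⟩ :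
        ↥{x : ↥(FullShift A) | x.1 ∈ XF Fw}) =
        ⟨⟨ofList [f e2], ofList_mem [f e2]⟩, hfmem e2 h2⟩ :=
      Subtype.ext (Subtype.ext (congrArg (fun z => ofList [z]) hfe))
    have hww : word1 e1 = word1 e2 :=
      p1.symm.trans ((congrArg (fun z => (phi z).1) hXX).trans p2)
    have h8 := congrFun (congrArg Subtype.val hww) 0
    exact Option.some.inj ((ofList_single_zero e1).symm.trans
      (h8.trans (ofList_single_zero e2)))

end OTW
end

section
/- Let X be a shift of finite type over a countably infinite alphabet and suppose φ : X → Y_E is an eventually finite periodic conjugacy onto the edge shift of a graph E. Then every edge of E appearing in Y_E is a loop based at a common vertex v, and consequently Y_E is the full shift over its edge alphabet. -/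
namespace OTW

variable {A : Type*}

/-! ### Auxiliary lemmas -/

section AuxGeneric

variable {C : Type*}

lemma none_mono {x : ℕ → Option C} (hx : x ∈ FullShift C) {n : ℕ} (hn : x n = none) :
    ∀ m, n ≤ m → x m = none := by
  intro m hm
  induction m, hm using Nat.le_induction with
  | base => exact hn
  | succ m _ ih => exact hx m ih

/-- `x` is a finite word of length exactly `L`. -/
def FinLen (x : ℕ → Option C) (L : ℕ) : Prop := x L = none ∧ ∀ n < L, x n ≠ none

lemma len_of_finLen {x : ℕ → Option C} {L : ℕ} (h : FinLen x L) : len x = (L : ℕ∞) := by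
  refine le_antisymm (iInf₂_le L h.1) (le_iInf₂ fun n hn => ?_)
  by_contra hc
  have hlt : n < L := by exact_mod_cast not_le.mp hc
  exact h.2 n hlt hn

lemma len_of_isInf {x : ℕ → Option C} (h : IsInf x) : len x = ⊤ := by
  refine eq_top_iff.mpr (le_iInf₂ fun n hn => absurd hn (h n))

lemma isInf_of_len_top {x : ℕ → Option C} (h : len x = ⊤) : IsInf x := by
  intro n hn
  have h1 : len x ≤ (n : ℕ∞) := iInf₂_le n hn
  rw [h] at h1
  exact ENat.coe_ne_top n (top_le_iff.mp h1)

lemma finLen_of_len {x : ℕ → Option C} (hx : x ∈ FullShift C) {L : ℕ}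
    (h : len x = (L : ℕ∞)) : FinLen x L := by
  constructor
  · by_contra hc
    have hstep : ∀ n, x n = none → (L + 1 : ℕ) ≤ n := by
      intro n hn
      by_contra h''
      exact hc (none_mono hx hn L (by omega))
    have h2 : ((L + 1 : ℕ) : ℕ∞) ≤ len x := le_iInf₂ fun n hn => by
      exact_mod_cast hstep n hn
    rw [h] at h2
    have := Nat.cast_le.mp h2
    omega
  · intro n hn hcn
    have h1 : len x ≤ (n : ℕ∞) := iInf₂_le n hcn
    rw [h] at h1
    have := Nat.cast_le.mp h1
    omega

lemma isInf_or_finLen (x : ℕ → Option C) : IsInf x ∨ ∃ L, FinLen x L := by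
  classical
  by_cases h : ∀ n, x n ≠ none
  · exact Or.inl h
  · right
    push_neg at h
    obtain ⟨n, hn⟩ := h
    have hex : ∃ n, x n = none := ⟨n, hn⟩
    exact ⟨Nat.find hex, Nat.find_spec hex, fun m hm => Nat.find_min hex hm⟩

lemma finLen_unique {x : ℕ → Option C} {L L' : ℕ} (h : FinLen x L) (h' : FinLen x L') :
    L = L' := by
  by_contra hc
  rcases Nat.lt_or_ge L L' with hlt | hge
  · exact h'.2 L hlt h.1
  · exact h.2 L' (by omega) h'.1

lemma finLen_word1 (c : C) : FinLen ((word1 c : ↥(FullShift C)).1) 1 := by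
  constructor
  · show ofList [c] 1 = none
    simp [ofList]
  · intro n hn
    interval_cases n
    simp [word1, ofList]

lemma shiftMap_iter (x : ↥(FullShift C)) (k : ℕ) :
    (shiftMap^[k] x).1 = fun n => x.1 (n + k) := by
  induction k with
  | zero => simp
  | succ k ih =>
    rw [Function.iterate_succ_apply']
    funext n
    show (shiftMap^[k] x).1 (n + 1) = x.1 (n + (k + 1))
    rw [ih]
    norm_num
    ring_nf

/-- Points of a finite intersection of cylinder preimages absorb all points that agree
on a long enough window and escape a finite set of letters at `none` positions. -/
lemma key_absorb (fs : Finset (Set ↥(FullShift C))) (x : ↥(FullShift C))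
    (hgen : ∀ s ∈ fs, ∃ w F, s = Subtype.val ⁻¹' Cyl w F)
    (hx : ∀ s ∈ fs, x ∈ s) :
    ∃ (N : ℕ) (B : Finset C), ∀ x' : ↥(FullShift C),
      (∀ i ≤ N, x.1 i ≠ none → x'.1 i = x.1 i) →
      (∀ i ≤ N, x.1 i = none → ∀ b ∈ B, x'.1 i ≠ some b) →
      ∀ s ∈ fs, x' ∈ s := by
  classical
  induction fs using Finset.induction_on with
  | empty => exact ⟨0, ∅, by simp⟩
  | insert t fs' hni ih =>
    obtain ⟨N, B, hNB⟩ := ih (fun s hs => hgen s (Finset.mem_insert_of_mem hs))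
      (fun s hs => hx s (Finset.mem_insert_of_mem hs))
    obtain ⟨w, F, rfl⟩ := hgen t (Finset.mem_insert_self _ _)
    refine ⟨max N w.length, B ∪ F, ?_⟩
    intro x' h1 h2 s hs
    rcases Finset.mem_insert.mp hs with rfl | hs'
    · have hxt := hx _ (Finset.mem_insert_self _ _)
      constructor
      · intro i hi
        have hxi := hxt.1 i hi
        have : x'.1 i = x.1 i := h1 i (le_trans (by omega) (le_max_right N w.length))
          (by rw [hxi]; exact Option.some_ne_none _)
        rw [this, hxi]
      · intro b hb
        cases hcase : x.1 w.length with
        | none =>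
          exact h2 w.length (le_max_right N w.length) hcase b (Finset.mem_union_right _ hb)
        | some c =>
          have : x'.1 w.length = x.1 w.length := h1 w.length (le_max_right N w.length)
            (by rw [hcase]; exact Option.some_ne_none _)
          rw [this]
          exact hxt.2 b hb
    · exact hNB x'
        (fun i hi => h1 i (le_trans hi (le_max_left _ _)))
        (fun i hi hnone b hb => h2 i (le_trans hi (le_max_left _ _)) hnone b
          (Finset.mem_union_left _ hb))
        s hs'

/-- Any open neighbourhood in the full shift absorbs all points agreeing on a window
and escaping a finite alphabet set at `none` positions. -/
lemma nbhd_absorb {O : Set ↥(FullShift C)} (hO : IsOpen O) {x : ↥(FullShift C)}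
    (hx : x ∈ O) :
    ∃ (N : ℕ) (B : Finset C), ∀ x' : ↥(FullShift C),
      (∀ i ≤ N, x.1 i ≠ none → x'.1 i = x.1 i) →
      (∀ i ≤ N, x.1 i = none → ∀ b ∈ B, x'.1 i ≠ some b) →
      x' ∈ O := by
  classical
  have hb := TopologicalSpace.isTopologicalBasis_of_subbasis
    (s := {S : Set ↥(FullShift C) | ∃ w F, S = Subtype.val ⁻¹' Cyl w F}) rfl
  obtain ⟨u, ⟨f, ⟨hfin, hsub⟩, rfl⟩, hxu, huO⟩ := hb.exists_subset_of_mem_open hx hO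
  obtain ⟨N, B, hNB⟩ := key_absorb hfin.toFinset x
    (fun s hs => hsub (hfin.mem_toFinset.mp hs))
    (fun s hs => hxu s (hfin.mem_toFinset.mp hs))
  refine ⟨N, B, fun x' c1 c2 => huO ?_⟩
  intro s hs
  exact hNB x' c1 c2 s (hfin.mem_toFinset.mpr hs)

end AuxGeneric
section AuxXF

variable {A : Type*}

/-- The set of letters occurring in some forbidden word. -/
def Sset (Fw : Set (List A)) : Set A := {c | ∃ w ∈ Fw, c ∈ w}

lemma sset_finite {Fw : Set (List A)} (hFw : Fw.Finite) : (Sset Fw).Finite := by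
  have h : Sset Fw = ⋃ w ∈ Fw, {c | c ∈ w} := by
    ext c; simp [Sset]
  rw [h]
  exact hFw.biUnion fun w _ => w.finite_toSet

/-- Occurrence of a word in a total sequence. -/
def occursIn (x : ℕ → A) (f : List A) (k : ℕ) : Prop :=
  ∀ j (hj : j < f.length), x (k + j) = f.get ⟨j, hj⟩

lemma xfinf_of_noocc {Fw : Set (List A)} {x : ℕ → A}
    (h : ∀ f ∈ Fw, ∀ k, ¬ occursIn x f k) : ofSeq x ∈ XFinf Fw := by
  constructor
  · intro n
    simp [ofSeq]
  · intro f hf k hblk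
    refine h f hf k fun j hj => ?_
    have := hblk j hj
    simpa [ofSeq] using this

lemma occ_letters {Fw : Set (List A)} {x : ℕ → A} {f : List A} {k : ℕ}
    (hf : f ∈ Fw) (h : occursIn x f k) :
    ∀ j (hj : j < f.length), x (k + j) ∈ Sset Fw := by
  intro j hj
  rw [h j hj]
  exact ⟨f, hf, f.get_mem _⟩

lemma noocc_sparse {Fw : Set (List A)} (hne : ([] : List A) ∉ Fw) {x : ℕ → A}
    (h1 : ∀ n, x n ∈ Sset Fw → x (n + 1) ∉ Sset Fw)
    (h2 : ∀ n, x n ∈ Sset Fw → [x n] ∉ Fw) :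
    ∀ f ∈ Fw, ∀ k, ¬ occursIn x f k := by
  intro f hf k hocc
  match f, hf, hocc with
  | [], hf, _ => exact hne hf
  | [c], hf, hocc =>
    have h0 : x (k + 0) = c := hocc 0 (by simp)
    have hS : x k ∈ Sset Fw := by
      have := occ_letters hf hocc 0 (by simp)
      simpa using this
    refine h2 k hS ?_
    have : x k = c := by simpa using h0
    rw [this]
    exact hf
  | c :: d :: t, hf, hocc =>
    have hS0 : x (k + 0) ∈ Sset Fw := occ_letters hf hocc 0 (by simp)
    have hS1 : x (k + 1) ∈ Sset Fw := occ_letters hf hocc 1 (by simp)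
    exact h1 (k + 0) hS0 (by simpa using hS1)

lemma xf_noocc {Fw : Set (List A)} {xo : ℕ → Option A} (hXF : xo ∈ XF Fw) :
    ∀ f ∈ Fw, ∀ k, ¬ hasBlockAt xo f k := by
  rcases hXF with h | h
  · exact h.2
  · obtain ⟨w, rfl, hinf⟩ := h
    intro f hf k hblk
    obtain ⟨β, hβ⟩ := hinf.nonempty
    obtain ⟨y, hy⟩ := hβ
    refine hy.2 f hf k fun j hj => ?_
    have hj' := hblk j hj
    have hlt : k + j < w.length := by
      by_contra hc
      rw [show ofList w (k + j) = none from by simp [ofList]; omega] at hj'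
      simp at hj'
    have hw : ofList w (k + j) = some (w.get ⟨k + j, hlt⟩) := by simp [ofList, hlt]
    rw [hw] at hj'
    have hcat : listCat (w ++ [β]) y (k + j) = some (w.get ⟨k + j, hlt⟩) := by
      unfold listCat
      rw [dif_pos (show k + j < (w ++ [β]).length by simp; omega)]
      congr 1
      show (w ++ [β])[k + j]'(by simp; omega) = w[k + j]'hlt
      exact List.getElem_append_left hlt
    rw [hcat, ← hj']

lemma noocc_prefixext {Fw : Set (List A)} {xo : ℕ → Option A} (hXF : xo ∈ XF Fw)
    {x' : ℕ → A} {L : ℕ}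
    (hag : ∀ n < L, xo n = some (x' n))
    (ht : ∀ n, L ≤ n → x' n ∉ Sset Fw) :
    ∀ f ∈ Fw, ∀ k, ¬ occursIn x' f k := by
  intro f hf k hocc
  by_cases hall : ∀ j, j < f.length → k + j < L
  · refine xf_noocc hXF f hf k fun j hj => ?_
    rw [hag (k + j) (hall j hj)]
    rw [hocc j hj]
  · push_neg at hall
    obtain ⟨j, hj, hjL⟩ := hall
    exact ht (k + j) hjL (occ_letters hf hocc j hj)

/-- Extension of a finite word by a constant letter. -/
def extSeq (w : List A) (γ : A) : ℕ → A :=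
  fun n => if h : n < w.length then w.get ⟨n, h⟩ else γ

lemma memfin [Infinite A] {Fw : Set (List A)} (hFw : Fw.Finite) {w : List A}
    (h : ∀ γ, γ ∉ Sset Fw → ofSeq (extSeq w γ) ∈ XFinf Fw) :
    ofList w ∈ XFfin Fw := by
  refine ⟨w, rfl, Set.Infinite.mono ?_ ((sset_finite hFw).infinite_compl)⟩
  intro γ hγ
  refine ⟨fun _ => γ, ?_⟩
  have heq : listCat (w ++ [γ]) (fun _ => γ) = ofSeq (extSeq w γ) := by
    funext n
    simp only [listCat, ofSeq, extSeq, List.length_append, List.length_singleton]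
    by_cases h1 : n < w.length
    · rw [dif_pos (by omega), dif_pos h1]
      congr 1
      exact List.getElem_append_left h1
    · rw [dif_neg h1]
      by_cases h2 : n < w.length + 1
      · rw [dif_pos h2]
        have hn : n = w.length := by omega
        subst hn
        congr 1
        simp
      · rw [dif_neg h2]
  rw [heq]
  exact h γ hγ

end AuxXF

lemma get_ofFn' {C : Type*} {m : ℕ} (g : Fin m → C) (i : ℕ) (h : i < (List.ofFn g).length) :
    (List.ofFn g).get ⟨i, h⟩ = g ⟨i, by simpa using h⟩ := by
  simp

section AuxTopo

variable {V₀ E₀ : Type*}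

/-- Infinite elements of the edge shift are infinite paths. -/
lemma ginf_of_closure (G : Ultragraph V₀ E₀) {y : ↥(FullShift E₀)}
    (hy : y ∈ edgeShift G) (hinf : IsInf y.1) : y.1 ∈ Ginf G := by
  refine ⟨hinf, fun n e f he hf => ?_⟩
  have hsome : ∀ i : Fin (n + 2), (y.1 i).isSome := by
    intro i
    exact Option.ne_none_iff_isSome.mp (hinf i)
  set w : List E₀ := List.ofFn (fun i : Fin (n + 2) => (y.1 i).get (hsome i)) with hw
  have hwget : ∀ (i : ℕ) (hi : i < w.length), w.get ⟨i, hi⟩ =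
      (y.1 i).get (hsome ⟨i, by simp [hw] at hi; omega⟩) := by
    intro i hi
    exact get_ofFn' _ i hi
  have hwlen : w.length = n + 2 := by simp [hw]
  have hopen : IsOpen (Subtype.val ⁻¹' Cyl w (∅ : Finset E₀) : Set ↥(FullShift E₀)) :=
    TopologicalSpace.isOpen_generateFrom_of_mem ⟨w, ∅, rfl⟩
  have hymem : y ∈ Subtype.val ⁻¹' Cyl w (∅ : Finset E₀) := by
    constructor
    · intro i hi
      rw [hwget i hi]
      simp
    · intro a ha
      exact absurd ha (Finset.notMem_empty a)
  obtain ⟨z, hzO, hzG⟩ := mem_closure_iff.mp hy _ hopen hymem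
  have hze : z.1 n = some e := by
    have h := hzO.1 n (by omega)
    rw [h, hwget n (by omega)]
    simp [he]
  have hzf : z.1 (n + 1) = some f := by
    have h := hzO.1 (n + 1) (by omega)
    rw [h, hwget (n + 1) (by omega)]
    simp [hf]
  exact hzG.2 n e f hze hzf

/-- A point all of whose `none`-positions can be decorated into infinite paths avoiding
any finite set of edges lies in the edge shift. -/
lemma mem_edgeShift_of_decorate (G : Ultragraph V₀ E₀) (y : ↥(FullShift E₀))
    (hdec : ∀ B : Finset E₀, ∃ z : ℕ → E₀,
      (∀ n, y.1 n ≠ none → some (z n) = y.1 n) ∧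
      (∀ n, y.1 n = none → z n ∉ B) ∧ ofSeq z ∈ Ginf G) :
    y ∈ edgeShift G := by
  rw [edgeShift, mem_closure_iff]
  intro O hO hyO
  obtain ⟨N, B, hNB⟩ := nbhd_absorb hO hyO
  obtain ⟨z, hz1, hz2, hzG⟩ := hdec B
  refine ⟨⟨ofSeq z, ofSeq_mem z⟩, ?_, hzG⟩
  refine hNB _ (fun i _ hi => hz1 i hi) (fun i _ hi b hb => ?_)
  intro hc
  have : z i = b := by simpa [ofSeq] using hc
  exact hz2 i hi (this ▸ hb)

end AuxTopo

section AuxCont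

/-- Continuity gives a finite window + escape set that determines a finite window
of the image. -/
lemma cont_window {A₀ E₁ : Type*} {Xset : Set ↥(FullShift A₀)} {Yset : Set ↥(FullShift E₁)}
    (ψ : ↥Xset → ↥Yset) (hc : Continuous ψ) (x : ↥Xset) (n : ℕ)
    (hsome : ∀ i, i ≤ n → (ψ x).1.1 i ≠ none) :
    ∃ (N : ℕ) (B : Finset A₀), ∀ x' : ↥Xset,
      (∀ i ≤ N, x.1.1 i ≠ none → x'.1.1 i = x.1.1 i) →
      (∀ i ≤ N, x.1.1 i = none → ∀ b ∈ B, x'.1.1 i ≠ some b) →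
      ∀ i ≤ n, (ψ x').1.1 i = (ψ x).1.1 i := by
  classical
  have hsome' : ∀ i : Fin (n + 1), ((ψ x).1.1 i).isSome := fun i =>
    Option.ne_none_iff_isSome.mp (hsome i (by omega))
  set w : List E₁ := List.ofFn (fun i : Fin (n + 1) => ((ψ x).1.1 i).get (hsome' i)) with hw
  have hwget : ∀ (i : ℕ) (hi : i < w.length), w.get ⟨i, hi⟩ =
      ((ψ x).1.1 i).get (hsome' ⟨i, by simpa [hw] using hi⟩) := by
    intro i hi
    exact get_ofFn' _ i hi
  have hwlen : w.length = n + 1 := by simp [hw]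
  have hopen0 : IsOpen (Subtype.val ⁻¹' Cyl w (∅ : Finset E₁) : Set ↥(FullShift E₁)) :=
    TopologicalSpace.isOpen_generateFrom_of_mem ⟨w, ∅, rfl⟩
  set Vs : Set ↥Yset := Subtype.val ⁻¹' (Subtype.val ⁻¹' Cyl w (∅ : Finset E₁)) with hVs
  have hopenV : IsOpen Vs := hopen0.preimage continuous_subtype_val
  have hmemV : ψ x ∈ Vs := by
    constructor
    · intro i hi
      rw [hwget i hi]
      simp
    · intro a ha
      exact absurd ha (Finset.notMem_empty a)
  have hopenU : IsOpen (ψ ⁻¹' Vs) := hc.isOpen_preimage _ hopenV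
  obtain ⟨O, hO, hOeq⟩ := isOpen_induced_iff.mp hopenU
  have hxO : x.1 ∈ O := by
    have : x ∈ ψ ⁻¹' Vs := hmemV
    rw [← hOeq] at this
    exact this
  obtain ⟨N, B, hNB⟩ := nbhd_absorb hO hxO
  refine ⟨N, B, fun x' c1 c2 i hi => ?_⟩
  have hx'O : x'.1 ∈ O := hNB x'.1 c1 c2
  have hx'V : ψ x' ∈ Vs := by
    have hmem : x' ∈ Subtype.val ⁻¹' O := hx'O
    rw [hOeq] at hmem
    exact hmem
  have h1 := hx'V.1 i (by omega)
  rw [h1, hwget i (by omega)]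
  simp

end AuxCont

lemma extSeq_ofFn {A₃ : Type*} {m : ℕ} (g : Fin m → A₃) (γ : A₃) (n : ℕ) :
    extSeq (List.ofFn g) γ n = if h : n < m then g ⟨n, h⟩ else γ := by
  simp only [extSeq, List.length_ofFn]
  by_cases h : n < m
  · rw [dif_pos h, dif_pos h]
    exact get_ofFn' g n (by simpa using h)
  · rw [dif_neg h, dif_neg h]

lemma ofList_ofFn {A₃ : Type*} {m : ℕ} (g : Fin m → A₃) (n : ℕ) :
    ofList (List.ofFn g) n = if h : n < m then some (g ⟨n, h⟩) else none := by
  simp only [ofList, List.length_ofFn]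
  by_cases h : n < m
  · rw [dif_pos h, dif_pos h]
    congr 1
    exact get_ofFn' g n (by simpa using h)
  · rw [dif_neg h, dif_neg h]
section AuxShift

variable {A₂ : Type*}

/-- The shift as a self-map of a shift-invariant subset. -/
def sigmaX (Xset : Set ↥(FullShift A₂)) (hInv : ∀ x : ↥Xset, shiftMap x.1 ∈ Xset) :
    ↥Xset → ↥Xset := fun x => ⟨shiftMap x.1, hInv x⟩

lemma sigmaX_iter_fn (Xset : Set ↥(FullShift A₂)) (hInv) (k : ℕ) (x : ↥Xset) :
    ((sigmaX Xset hInv)^[k] x).1.1 = fun n => x.1.1 (n + k) := by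
  induction k with
  | zero => funext n; simp
  | succ k ih =>
    rw [Function.iterate_succ_apply']
    funext n
    show ((sigmaX Xset hInv)^[k] x).1.1 (n + 1) = x.1.1 (n + (k + 1))
    rw [ih]
    show x.1.1 (n + 1 + k) = x.1.1 (n + (k + 1))
    rw [show n + 1 + k = n + (k + 1) from by omega]

lemma phi_comm_iter {E₂ : Type*} {Xset : Set ↥(FullShift A₂)} {Yset : Set ↥(FullShift E₂)}
    (ψ : ↥Xset → ↥Yset) (hInv : ∀ x : ↥Xset, shiftMap x.1 ∈ Xset)
    (hcomm : ∀ x : ↥Xset, (ψ (sigmaX Xset hInv x)).1 = shiftMap (ψ x).1) (k : ℕ)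
    (x : ↥Xset) : (ψ ((sigmaX Xset hInv)^[k] x)).1 = shiftMap^[k] (ψ x).1 := by
  induction k with
  | zero => rfl
  | succ k ih =>
    rw [Function.iterate_succ_apply', Function.iterate_succ_apply', ← ih]
    exact hcomm ((sigmaX Xset hInv)^[k] x)

end AuxShift
/-- if a shift of finite type over an infinite alphabet is conjugate, via an
eventually finite periodic conjugacy, to the edge shift of a graph, then every edge
appearing in the edge shift is a loop at a common vertex and the edge shift is the full
shift over its edge alphabet. -/
theorem bouquet_of_evFinPeriodic_conjugacy {A V E : Type*} [Countable A] [Infinite A]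
    [Countable V] [Countable E]
    (Fw : Set (List A)) (hFw : Fw.Finite) (hne : [] ∉ Fw) (G : DirGraph V E)
    (phi : ↥{x : ↥(FullShift A) | x.1 ∈ XF Fw} → ↥(edgeShift G.toUltragraph))
    (hphi : IsConjugacy {x : ↥(FullShift A) | x.1 ∈ XF Fw} (edgeShift G.toUltragraph) phi)
    (hper : EvFinPeriodic phi) :
    ∃ v : V, (∀ e : E, word1 e ∈ edgeShift G.toUltragraph → G.s e = v ∧ G.r e = v) ∧
      edgeShift G.toUltragraph =
        {y : ↥(FullShift E) | ∀ n e, y.1 n = some e → G.s e = v ∧ G.r e = v} := by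
  classical
  obtain ⟨p, hp2, hperiod⟩ := hper
  -- fresh letters
  have hSfin : (Sset Fw).Finite := sset_finite hFw
  have hA' : {α : A | α ∉ Sset Fw}.Infinite := hSfin.infinite_compl
  obtain ⟨a, ha⟩ := hA'.nonempty
  -- length-one fresh words belong to the shift
  have hword1 : ∀ α : A, α ∉ Sset Fw → (word1 α : ↥(FullShift A)).1 ∈ XF Fw := by
    intro α hα
    refine Or.inr (memfin hFw fun γ hγ => xfinf_of_noocc (noocc_sparse hne ?_ ?_))
    · intro n hn
      exfalso
      have hval : extSeq [α] γ n = if n = 0 then α else γ := by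
        cases n <;> simp [extSeq]
      rw [hval] at hn
      split at hn
      · exact hα hn
      · exact hγ hn
    · intro n hn
      exfalso
      have hval : extSeq [α] γ n = if n = 0 then α else γ := by
        cases n <;> simp [extSeq]
      rw [hval] at hn
      split at hn
      · exact hα hn
      · exact hγ hn
  -- shift on the domain
  have hcommk := phi_comm_iter phi hphi.shiftInvX hphi.shift_comm
  -- length transfer
  have hlenφ : ∀ (x : ↥{x : ↥(FullShift A) | x.1 ∈ XF Fw}) (L : ℕ),
      FinLen x.1.1 L → FinLen (phi x).1.1 L := by
    intro x L hL
    exact finLen_of_len (phi x).1.2 (by rw [hphi.len_eq x, len_of_finLen hL])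
  have hinfφ : ∀ (x : ↥{x : ↥(FullShift A) | x.1 ∈ XF Fw}),
      IsInf x.1.1 → IsInf (phi x).1.1 := by
    intro x hx
    exact isInf_of_len_top (by rw [hphi.len_eq x, len_of_isInf hx])
  -- extraction of length-one points
  have hsingle : ∀ (x : ↥{x : ↥(FullShift A) | x.1 ∈ XF Fw}), FinLen x.1.1 1 →
      ∃ (α : A) (hα : (word1 α : ↥(FullShift A)).1 ∈ XF Fw), x = ⟨word1 α, hα⟩ := by
    intro x hx
    obtain ⟨α, hα0⟩ := Option.ne_none_iff_exists'.mp (hx.2 0 (by omega))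
    have hv : x.1 = word1 α := by
      apply Subtype.ext
      funext n
      cases n with
      | zero => rw [hα0]; simp [word1, ofList]
      | succ n =>
        rw [none_mono x.1.2 hx.1 (n + 1) (by omega)]
        simp [word1, ofList]
    have hα : (word1 α : ↥(FullShift A)).1 ∈ XF Fw := by rw [← hv]; exact x.2
    exact ⟨α, hα, Subtype.ext hv⟩
  -- the one-block map
  have hget : ∀ (α : A) (h : (word1 α : ↥(FullShift A)).1 ∈ XF Fw),
      ∃ g : E, (phi ⟨word1 α, h⟩).1.1 0 = some g := by
    intro α h
    exact Option.ne_none_iff_exists'.mp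
      ((hlenφ ⟨word1 α, h⟩ 1 (finLen_word1 α)).2 0 (by omega))
  choose eF heF using hget
  have hshape : ∀ (α : A) (h : (word1 α : ↥(FullShift A)).1 ∈ XF Fw),
      (phi ⟨word1 α, h⟩).1 = word1 (eF α h) := by
    intro α h
    have hfl := hlenφ ⟨word1 α, h⟩ 1 (finLen_word1 α)
    apply Subtype.ext
    funext n
    cases n with
    | zero => rw [heF α h]; simp [word1, ofList]
    | succ n =>
      rw [none_mono (phi ⟨word1 α, h⟩).1.2 hfl.1 (n + 1) (by omega)]
      simp [word1, ofList]
  have heFcongr : ∀ {α β : A} (_ : α = β) (hα : (word1 α : ↥(FullShift A)).1 ∈ XF Fw)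
      (hβ : (word1 β : ↥(FullShift A)).1 ∈ XF Fw), eF α hα = eF β hβ := by
    intro α β hab hα hβ
    subst hab
    rfl
  have hinjF : ∀ (α β : A) (hα : (word1 α : ↥(FullShift A)).1 ∈ XF Fw)
      (hβ : (word1 β : ↥(FullShift A)).1 ∈ XF Fw), eF α hα = eF β hβ → α = β := by
    intro α β hα hβ he
    have h1 : phi ⟨word1 α, hα⟩ = phi ⟨word1 β, hβ⟩ := by
      apply Subtype.ext
      rw [hshape α hα, hshape β hβ, he]
    have h2 := hphi.bijective.1 h1
    have h3 := congrArg (fun z : ↥{x : ↥(FullShift A) | x.1 ∈ XF Fw} => z.1.1 0) h2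
    have h4 : (some α : Option A) = some β := h3
    exact Option.some.inj h4
  -- pinning of images of p-periodic points
  have hpin : ∀ (ζ : ℕ → A) (hζmem : (⟨ofSeq ζ, ofSeq_mem ζ⟩ : ↥(FullShift A)) ∈
        {x : ↥(FullShift A) | x.1 ∈ XF Fw})
      (_ : ∀ k, ζ (k + p) = ζ k)
      (_ : ∀ i : ℕ, trunc p (fun n => (some (ζ (n + i)) : Option A)) ∈ XF Fw)
      (hζ1 : ∀ m : ℕ, (word1 (ζ m) : ↥(FullShift A)).1 ∈ XF Fw),
      ∀ m, (phi ⟨⟨ofSeq ζ, ofSeq_mem ζ⟩, hζmem⟩).1.1 m = some (eF (ζ m) (hζ1 m)) := by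
    intro ζ hζmem hζp hζtr hζ1
    set σX := sigmaX {x : ↥(FullShift A) | x.1 ∈ XF Fw} hphi.shiftInvX with hσX
    set Z : ↥{x : ↥(FullShift A) | x.1 ∈ XF Fw} := ⟨⟨ofSeq ζ, ofSeq_mem ζ⟩, hζmem⟩ with hZdef
    have hZfn : Z.1.1 = fun n => some (ζ n) := rfl
    have hφper : ∀ n, (phi Z).1.1 (n + p) = (phi Z).1.1 n := by
      have hZp : σX^[p] Z = Z := by
        apply Subtype.ext
        apply Subtype.ext
        rw [sigmaX_iter_fn]
        funext n
        show (ofSeq ζ) (n + p) = (ofSeq ζ) n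
        simp [ofSeq, hζp n]
      intro n
      have h1 : (phi (σX^[p] Z)).1 = (phi Z).1 := by rw [hZp]
      rw [hcommk p Z] at h1
      have h2 := congrArg (fun zz : ↥(FullShift E) => zz.1 n) h1
      rw [shiftMap_iter] at h2
      exact h2
    intro m
    -- the shifted point
    have hZifn : (σX^[m + 1] Z).1.1 = fun n => some (ζ (n + (m + 1))) := by
      rw [sigmaX_iter_fn]
      rfl
    have hZiinf : IsInf (σX^[m + 1] Z).1.1 := by
      rw [hZifn]
      intro n
      exact Option.some_ne_none _
    have hZiper : ∀ k, (σX^[m + 1] Z).1.1 (k + p) = (σX^[m + 1] Z).1.1 k := by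
      intro k
      rw [hZifn]
      show some (ζ (k + p + (m + 1))) = some (ζ (k + (m + 1)))
      rw [show k + p + (m + 1) = (k + (m + 1)) + p from by omega, hζp]
    have hmemW : (⟨trunc p (σX^[m + 1] Z).1.1, trunc_mem (σX^[m + 1] Z).1.2 p⟩ :
        ↥(FullShift A)) ∈ {x : ↥(FullShift A) | x.1 ∈ XF Fw} := by
      show trunc p (σX^[m + 1] Z).1.1 ∈ XF Fw
      rw [hZifn]
      exact hζtr (m + 1)
    have happ := hperiod (σX^[m + 1] Z) hZiinf hZiper hmemW (p - 1) (by omega)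
    have hWlast : σX^[p - 1] (⟨⟨trunc p (σX^[m + 1] Z).1.1,
        trunc_mem (σX^[m + 1] Z).1.2 p⟩, hmemW⟩ : ↥{x : ↥(FullShift A) | x.1 ∈ XF Fw}) =
        ⟨word1 (ζ m), hζ1 m⟩ := by
      apply Subtype.ext
      apply Subtype.ext
      rw [sigmaX_iter_fn]
      funext n
      show trunc p (σX^[m + 1] Z).1.1 (n + (p - 1)) = (word1 (ζ m)).1 n
      rw [hZifn]
      simp only [trunc]
      cases n with
      | zero =>
        rw [if_pos (by omega : 0 + (p - 1) < p)]
        rw [show 0 + (p - 1) + (m + 1) = m + p from by omega, hζp m]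
        simp [word1, ofList]
      | succ n =>
        rw [if_neg (by omega : ¬ (n + 1 + (p - 1) < p))]
        simp [word1, ofList]
    have hval : (phi (σX^[p - 1] (⟨⟨trunc p (σX^[m + 1] Z).1.1,
        trunc_mem (σX^[m + 1] Z).1.2 p⟩, hmemW⟩ :
        ↥{x : ↥(FullShift A) | x.1 ∈ XF Fw}))).1.1 0 =
        (phi (⟨⟨trunc p (σX^[m + 1] Z).1.1, trunc_mem (σX^[m + 1] Z).1.2 p⟩, hmemW⟩ :
        ↥{x : ↥(FullShift A) | x.1 ∈ XF Fw})).1.1 (p - 1) := by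
      rw [hcommk (p - 1)]
      rw [shiftMap_iter]
      simp
    rw [hWlast, heF (ζ m) (hζ1 m), happ] at hval
    -- hval : some (eF (ζ m) _) = (phi (σX^[m+1] Z)).1.1 (p - 1)
    have hZival : (phi (σX^[m + 1] Z)).1.1 (p - 1) = (phi Z).1.1 m := by
      rw [hcommk (m + 1) Z, shiftMap_iter]
      show (phi Z).1.1 ((p - 1) + (m + 1)) = (phi Z).1.1 m
      rw [show (p - 1) + (m + 1) = m + p from by omega, hφper m]
    rw [hZival] at hval
    exact hval.symm
  -- the concrete periodic points (α a^{p-1})^∞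
  have hζfacts : ∀ (α : A) (hα1 : (word1 α : ↥(FullShift A)).1 ∈ XF Fw),
      ∃ hζmem : (⟨ofSeq (fun n => if n % p = 0 then α else a), ofSeq_mem _⟩ :
          ↥(FullShift A)) ∈ {x : ↥(FullShift A) | x.1 ∈ XF Fw},
      ∀ m, (phi ⟨⟨ofSeq (fun n => if n % p = 0 then α else a), ofSeq_mem _⟩, hζmem⟩).1.1 m =
        some (eF (if m % p = 0 then α else a)
          (by split
              · exact hα1
              · exact hword1 a ha)) := by
    intro α hα1
    have haS : a ∉ Sset Fw := ha
    set ζ : ℕ → A := fun n => if n % p = 0 then α else a with hζ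
    -- [α] is not forbidden
    have hαF : [α] ∉ Fw := by
      intro hmem
      refine xf_noocc hα1 [α] hmem 0 fun j hj => ?_
      have hj0 : j = 0 := by simpa using hj
      subst hj0
      simp [word1, ofList]
    have hζS : ∀ n, ζ n ∈ Sset Fw → ζ n = α ∧ n % p = 0 := by
      intro n hn
      rw [hζ] at hn ⊢
      simp only at hn ⊢
      split at hn
      · exact ⟨by rw [if_pos ‹_›], ‹_›⟩
      · exact absurd hn haS
    have hsucc : ∀ n, n % p = 0 → (n + 1) % p ≠ 0 := by
      intro n hn hc
      have h1 : p ∣ n := Nat.dvd_of_mod_eq_zero hn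
      have h2 : p ∣ n + 1 := Nat.dvd_of_mod_eq_zero hc
      have := Nat.dvd_sub h2 h1
      simp at this
      omega
    have hnoocc : ∀ f ∈ Fw, ∀ k, ¬ occursIn ζ f k := by
      apply noocc_sparse hne
      · intro n hn
        obtain ⟨he, hm⟩ := hζS n hn
        intro hc
        obtain ⟨he2, hm2⟩ := hζS (n + 1) hc
        exact hsucc n hm hm2
      · intro n hn
        obtain ⟨he, hm⟩ := hζS n hn
        rw [he]
        exact hαF
    have hζmem : (⟨ofSeq ζ, ofSeq_mem ζ⟩ : ↥(FullShift A)) ∈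
        {x : ↥(FullShift A) | x.1 ∈ XF Fw} :=
      Or.inl (xfinf_of_noocc hnoocc)
    have hζp : ∀ k, ζ (k + p) = ζ k := by
      intro k
      rw [hζ]
      simp [Nat.add_mod_right]
    have hζtr : ∀ i : ℕ, trunc p (fun n => (some (ζ (n + i)) : Option A)) ∈ XF Fw := by
      intro i
      have heq : trunc p (fun n => (some (ζ (n + i)) : Option A)) =
          ofList (List.ofFn (fun j : Fin p => ζ (j.1 + i))) := by
        funext n
        rw [ofList_ofFn]
        simp only [trunc]
        by_cases hn : n < p
        · rw [if_pos hn, dif_pos hn]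
        · rw [if_neg hn, dif_neg hn]
      rw [heq]
      refine Or.inr (memfin hFw fun γ hγ => xfinf_of_noocc (noocc_sparse hne ?_ ?_))
      · intro n hn hc
        rw [extSeq_ofFn] at hn hc
        by_cases hm : n < p
        · rw [dif_pos hm] at hn
          obtain ⟨he, hmod⟩ := hζS _ hn
          by_cases hm2 : n + 1 < p
          · rw [dif_pos hm2] at hc
            obtain ⟨he2, hmod2⟩ := hζS _ hc
            rw [show n + 1 + i = (n + i) + 1 from by omega] at hmod2
            exact hsucc _ hmod hmod2
          · rw [dif_neg hm2] at hc
            exact hγ hc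
        · rw [dif_neg hm] at hn
          exact hγ hn
      · intro n hn
        rw [extSeq_ofFn] at hn ⊢
        by_cases hm : n < p
        · rw [dif_pos hm] at hn ⊢
          obtain ⟨he, hmod⟩ := hζS _ hn
          rw [he]
          exact hαF
        · rw [dif_neg hm] at hn
          exact absurd hn hγ
    have hζ1 : ∀ m : ℕ, (word1 (ζ m) : ↥(FullShift A)).1 ∈ XF Fw := by
      intro m
      rw [hζ]
      simp only
      split
      · exact hα1
      · exact hword1 a ha
    refine ⟨hζmem, fun m => ?_⟩
    rw [hpin ζ hζmem hζp hζtr hζ1 m]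
  -- chain relations and the common vertex
  have key_chain : ∀ (α : A) (hα1 : (word1 α : ↥(FullShift A)).1 ∈ XF Fw),
      G.s (eF a (hword1 a ha)) = G.r (eF α hα1) ∧
      G.s (eF α hα1) = G.r (eF a (hword1 a ha)) := by
    intro α hα1
    obtain ⟨hζmem, hpins⟩ := hζfacts α hα1
    have hZinf : IsInf (⟨ofSeq (fun n => if n % p = 0 then α else a), ofSeq_mem _⟩ :
        ↥(FullShift A)).1 := fun n => Option.some_ne_none _
    have hG := ginf_of_closure G.toUltragraph
      (phi ⟨⟨ofSeq (fun n => if n % p = 0 then α else a), ofSeq_mem _⟩, hζmem⟩).2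
      (hinfφ _ hZinf)
    have h0 : (phi ⟨⟨ofSeq (fun n => if n % p = 0 then α else a), ofSeq_mem _⟩,
        hζmem⟩).1.1 0 = some (eF α hα1) := by
      rw [hpins 0]
      exact congrArg some (heFcongr (by simp) _ _)
    have h1 : (phi ⟨⟨ofSeq (fun n => if n % p = 0 then α else a), ofSeq_mem _⟩,
        hζmem⟩).1.1 1 = some (eF a (hword1 a ha)) := by
      rw [hpins 1]
      refine congrArg some (heFcongr ?_ _ _)
      rw [if_neg]
      rw [Nat.mod_eq_of_lt (by omega)]
      omega
    have hpm : (phi ⟨⟨ofSeq (fun n => if n % p = 0 then α else a), ofSeq_mem _⟩,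
        hζmem⟩).1.1 (p - 1) = some (eF a (hword1 a ha)) := by
      rw [hpins (p - 1)]
      refine congrArg some (heFcongr ?_ _ _)
      rw [if_neg]
      rw [Nat.mod_eq_of_lt (by omega)]
      omega
    have hpp : (phi ⟨⟨ofSeq (fun n => if n % p = 0 then α else a), ofSeq_mem _⟩,
        hζmem⟩).1.1 p = some (eF α hα1) := by
      rw [hpins p]
      exact congrArg some (heFcongr (by simp [Nat.mod_self]) _ _)
    constructor
    · have := hG.2 0 _ _ h0 h1
      exact Set.mem_singleton_iff.mp this
    · have h2 := hG.2 (p - 1) _ _ hpm (by rw [show p - 1 + 1 = p from by omega]; exact hpp)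
      exact Set.mem_singleton_iff.mp h2
  have hsr : G.s (eF a (hword1 a ha)) = G.r (eF a (hword1 a ha)) :=
    (key_chain a (hword1 a ha)).1
  have hloopF : ∀ (α : A) (hα1 : (word1 α : ↥(FullShift A)).1 ∈ XF Fw),
      G.s (eF α hα1) = G.s (eF a (hword1 a ha)) ∧
      G.r (eF α hα1) = G.s (eF a (hword1 a ha)) := by
    intro α hα1
    constructor
    · rw [(key_chain α hα1).2, ← hsr]
    · rw [← (key_chain α hα1).1]
  -- infinitely many loops
  have hinj' : Set.InjOn (fun α : A =>
      if h : (word1 α : ↥(FullShift A)).1 ∈ XF Fw then eF α h else eF a (hword1 a ha))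
      {α : A | α ∉ Sset Fw} := by
    intro α hαA β hβA hfe
    simp only at hfe
    rw [dif_pos (hword1 α hαA), dif_pos (hword1 β hβA)] at hfe
    exact hinjF α β _ _ hfe
  have himg : ((fun α : A =>
      if h : (word1 α : ↥(FullShift A)).1 ∈ XF Fw then eF α h else eF a (hword1 a ha)) ''
      {α : A | α ∉ Sset Fw}).Infinite := (Set.infinite_image_iff hinj').mpr hA'
  have hfresh : ∀ B : Finset E, ∃ g : E,
      (G.s g = G.s (eF a (hword1 a ha)) ∧ G.r g = G.s (eF a (hword1 a ha))) ∧ g ∉ B := by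
    intro B
    obtain ⟨g, hg, hgB⟩ := himg.exists_notMem_finset B
    obtain ⟨α, hαA, hfα⟩ := hg
    simp only at hfα
    rw [dif_pos (hword1 α hαA)] at hfα
    refine ⟨eF α (hword1 α hαA), hloopF α (hword1 α hαA), ?_⟩
    rw [hfα]
    exact hgB
  -- edges of length-one elements of the edge shift are loops
  have hw1Y : ∀ g : E, (word1 g : ↥(FullShift E)) ∈ edgeShift G.toUltragraph →
      G.s g = G.s (eF a (hword1 a ha)) ∧ G.r g = G.s (eF a (hword1 a ha)) := by
    intro g hg
    obtain ⟨x, hx⟩ := hphi.bijective.2 ⟨word1 g, hg⟩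
    have hfl : FinLen x.1.1 1 := by
      refine finLen_of_len x.1.2 ?_
      rw [← hphi.len_eq x, hx]
      exact len_of_finLen (finLen_word1 g)
    obtain ⟨δ, hδ, rfl⟩ := hsingle x hfl
    have hval := heF δ hδ
    rw [hx] at hval
    have hge : (some g : Option E) = some (eF δ hδ) := hval
    rw [Option.some.inj hge]
    exact hloopF δ hδ
  -- every edge with range at the common vertex is a loop
  have hrange_loop : ∀ g : E, G.r g = G.s (eF a (hword1 a ha)) →
      G.s g = G.s (eF a (hword1 a ha)) ∧ G.r g = G.s (eF a (hword1 a ha)) := by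
    intro g hgr
    apply hw1Y g
    apply mem_edgeShift_of_decorate
    intro B
    obtain ⟨gβ, hgβ, hgβB⟩ := hfresh B
    refine ⟨fun n => if n = 0 then g else gβ, ?_, ?_, ?_, ?_⟩
    · intro n hn
      have hn0 : n = 0 := by
        by_contra hc
        apply hn
        show ofList [g] n = none
        simp only [ofList]
        rw [dif_neg (by simp; omega)]
      subst hn0
      simp [word1, ofList]
    · intro n hn
      have hn0 : n ≠ 0 := by
        intro h0
        subst h0
        have : ofList [g] 0 = none := hn
        simp [ofList] at this
      show (if n = 0 then g else gβ) ∉ B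
      rw [if_neg hn0]
      exact hgβB
    · intro n
      exact Option.some_ne_none _
    · intro n e f hee hff
      have hef : (if n = 0 then g else gβ) = e := Option.some.inj hee
      have hff' : (if n + 1 = 0 then g else gβ) = f := Option.some.inj hff
      rw [if_neg (by omega)] at hff'
      show G.s f ∈ ({G.r e} : Set V)
      rw [Set.mem_singleton_iff, ← hff', ← hef]
      by_cases hn0 : n = 0
      · rw [if_pos hn0, hgβ.1, hgr]
      · rw [if_neg hn0, hgβ.1, hgβ.2]
  set v0 := G.s (eF a (hword1 a ha)) with hv0
  -- shift helpers for the induction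
  have hσfl : ∀ (x : ↥{x : ↥(FullShift A) | x.1 ∈ XF Fw}) (L : ℕ), FinLen x.1.1 (L + 1) →
      FinLen (sigmaX {x : ↥(FullShift A) | x.1 ∈ XF Fw} hphi.shiftInvX x).1.1 L := by
    intro x L hx
    constructor
    · show x.1.1 (L + 1) = none
      exact hx.1
    · intro m hm
      show x.1.1 (m + 1) ≠ none
      exact hx.2 (m + 1) (by omega)
  have hσval : ∀ (x : ↥{x : ↥(FullShift A) | x.1 ∈ XF Fw}) (n : ℕ),
      (phi (sigmaX {x : ↥(FullShift A) | x.1 ∈ XF Fw} hphi.shiftInvX x)).1.1 n =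
      (phi x).1.1 (n + 1) := by
    intro x n
    rw [show (phi (sigmaX {x : ↥(FullShift A) | x.1 ∈ XF Fw} hphi.shiftInvX x)).1 =
      shiftMap (phi x).1 from hphi.shift_comm x]
    rfl
  -- all letters of images of finite words are loops at v0
  have Qfin : ∀ (L : ℕ) (x : ↥{x : ↥(FullShift A) | x.1 ∈ XF Fw}), FinLen x.1.1 L →
      ∀ (n : ℕ) (g : E), (phi x).1.1 n = some g → G.s g = v0 ∧ G.r g = v0 := by
    intro L
    induction L using Nat.strong_induction_on with
    | _ L IH =>
    intro x hxL n g hg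
    have hφL : FinLen (phi x).1.1 L := hlenφ x L hxL
    have hnL : n < L := by
      by_contra hc
      rw [none_mono (phi x).1.2 hφL.1 n (by omega)] at hg
      simp at hg
    cases n with
    | succ n' =>
      have hsfl : FinLen (sigmaX {x : ↥(FullShift A) | x.1 ∈ XF Fw} hphi.shiftInvX x).1.1
          (L - 1) := by
        refine hσfl x (L - 1) ?_
        rw [show L - 1 + 1 = L from by omega]
        exact hxL
      refine IH (L - 1) (by omega) _ hsfl n' g ?_
      rw [hσval x n']
      exact hg
    | zero =>
      by_cases hL1 : L = 1
      · subst hL1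
        obtain ⟨α, hα, rfl⟩ := hsingle x hxL
        rw [heF α hα] at hg
        rw [← Option.some.inj hg]
        exact hloopF α hα
      · have hL2 : 2 ≤ L := by omega
        obtain ⟨g₁, hg₁⟩ := Option.ne_none_iff_exists'.mp (hφL.2 1 (by omega))
        have hsfl : FinLen (sigmaX {x : ↥(FullShift A) | x.1 ∈ XF Fw} hphi.shiftInvX x).1.1
            (L - 1) := by
          refine hσfl x (L - 1) ?_
          rw [show L - 1 + 1 = L from by omega]
          exact hxL
        have hloop1 : G.s g₁ = v0 ∧ G.r g₁ = v0 := by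
          refine IH (L - 1) (by omega) _ hsfl 0 g₁ ?_
          rw [hσval x 0]
          exact hg₁
        -- the chain relation r g = s g₁ via continuity
        obtain ⟨N, B, hNB⟩ := cont_window phi hphi.continuous x 1
          (fun i hi => hφL.2 i (by omega))
        obtain ⟨γ, hγ⟩ := (hA'.diff B.finite_toSet).nonempty
        have hγS : γ ∉ Sset Fw := hγ.1
        have hγB : γ ∉ B := fun hb => hγ.2 (Finset.mem_coe.mpr hb)
        have hx'inf : ofSeq (fun n => (x.1.1 n).getD γ) ∈ XFinf Fw := by
          refine xfinf_of_noocc (noocc_prefixext (L := L) x.2 ?_ ?_)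
          · intro m hm
            cases hc : x.1.1 m with
            | none => exact absurd hc (hxL.2 m hm)
            | some c => rfl
          · intro m hm
            rw [none_mono x.1.2 hxL.1 m hm]
            exact hγS
        have happly := hNB ⟨⟨ofSeq (fun n => (x.1.1 n).getD γ), ofSeq_mem _⟩,
          Or.inl hx'inf⟩ ?_ ?_
        rotate_left
        · intro i _ hi
          show some ((x.1.1 i).getD γ) = x.1.1 i
          cases hc : x.1.1 i with
          | none => exact absurd hc hi
          | some c => rfl
        · intro i _ hi b hb
          show some ((x.1.1 i).getD γ) ≠ some b
          rw [hi]
          intro hc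
          rw [← Option.some.inj hc] at hb
          exact hγB hb
        have h0' := happly 0 (by omega)
        have h1' := happly 1 le_rfl
        have hpath := ginf_of_closure G.toUltragraph
          (phi ⟨⟨ofSeq (fun n => (x.1.1 n).getD γ), ofSeq_mem _⟩, Or.inl hx'inf⟩).2
          (hinfφ _ (fun n => Option.some_ne_none _))
        have hchain := hpath.2 0 g g₁ (by rw [h0']; exact hg) (by rw [h1']; exact hg₁)
        have hrg : G.r g = G.s g₁ := (Set.mem_singleton_iff.mp hchain).symm
        refine hrange_loop g ?_
        rw [hrg, hloop1.1]
  -- all letters of images of infinite sequences are loops at v0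
  have Qinf : ∀ (x : ↥{x : ↥(FullShift A) | x.1 ∈ XF Fw}), IsInf x.1.1 →
      ∀ (n : ℕ) (g : E), (phi x).1.1 n = some g → G.s g = v0 ∧ G.r g = v0 := by
    intro x hxinf n g hg
    obtain ⟨N, B, hNB⟩ := cont_window phi hphi.continuous x n
      (fun i _ => hinfφ x hxinf i)
    have htr : trunc (N + 1) x.1.1 ∈ XF Fw := by
      have heq : trunc (N + 1) x.1.1 = ofList (List.ofFn (fun j : Fin (N + 1) =>
          (x.1.1 j.1).get (Option.ne_none_iff_isSome.mp (hxinf j.1)))) := by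
        funext m
        rw [ofList_ofFn]
        simp only [trunc]
        by_cases hm : m < N + 1
        · rw [if_pos hm, dif_pos hm]
          exact (Option.some_get _).symm
        · rw [if_neg hm, dif_neg hm]
      rw [heq]
      refine Or.inr (memfin hFw fun γ hγ => ?_)
      refine xfinf_of_noocc (noocc_prefixext (L := N + 1) x.2 ?_ ?_)
      · intro m hm
        rw [extSeq_ofFn, dif_pos hm]
        exact (Option.some_get _).symm
      · intro m hm
        rw [extSeq_ofFn, dif_neg (by omega)]
        exact hγ
    have happly := hNB ⟨⟨trunc (N + 1) x.1.1, trunc_mem x.1.2 (N + 1)⟩, htr⟩ ?_ ?_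
    rotate_left
    · intro i hi _
      show trunc (N + 1) x.1.1 i = x.1.1 i
      simp only [trunc]
      rw [if_pos (by omega)]
    · intro i _ hi
      exact absurd hi (hxinf i)
    have hfl : FinLen (trunc (N + 1) x.1.1) (N + 1) := by
      constructor
      · simp [trunc]
      · intro m hm
        simp only [trunc]
        rw [if_pos hm]
        exact hxinf m
    refine Qfin (N + 1) ⟨⟨trunc (N + 1) x.1.1, trunc_mem x.1.2 (N + 1)⟩, htr⟩ hfl n g ?_
    rw [happly n le_rfl]
    exact hg
  -- conclusion
  refine ⟨v0, fun e he => hw1Y e he, Set.Subset.antisymm ?_ ?_⟩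
  · intro y hy
    intro n e hne
    obtain ⟨x, hx⟩ := hphi.bijective.2 ⟨y, hy⟩
    have hval : (phi x).1.1 n = y.1 n := by rw [hx]
    rcases isInf_or_finLen x.1.1 with hinf | ⟨L, hL⟩
    · exact Qinf x hinf n e (by rw [hval]; exact hne)
    · exact Qfin L x hL n e (by rw [hval]; exact hne)
  · intro y hy
    apply mem_edgeShift_of_decorate
    intro B
    obtain ⟨gβ, hgβ, hgβB⟩ := hfresh B
    have hzloop : ∀ m, G.s ((y.1 m).getD gβ) = v0 ∧ G.r ((y.1 m).getD gβ) = v0 := by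
      intro m
      cases hc : y.1 m with
      | none => exact hgβ
      | some c => exact hy m c hc
    refine ⟨fun n => (y.1 n).getD gβ, ?_, ?_, ?_, ?_⟩
    · intro n hn
      cases hc : y.1 n with
      | none => exact absurd hc hn
      | some c => simp [hc]
    · intro n hn
      show (y.1 n).getD gβ ∉ B
      rw [hn]
      exact hgβB
    · intro n
      exact Option.some_ne_none _
    · intro n e f hee hff
      show G.s f ∈ ({G.r e} : Set V)
      rw [Set.mem_singleton_iff]
      have he' : (y.1 n).getD gβ = e := Option.some.inj hee
      have hf' : (y.1 (n + 1)).getD gβ = f := Option.some.inj hff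
      rw [← he', ← hf', (hzloop (n + 1)).1, (hzloop n).2]

end OTW
end
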